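/- arXiv:2304.01281 — 6 statements merged into one kernel-verified Lean document; each statement's English description precedes it below -/
import Mathlib

section
/- Let G be a graph with maximum degree d ≥ 2 and girth at least 2r−1, and let x be an eigenvector of the adjacency matrix of G with ℓ2-norm 1, corresponding to an eigenvalue μ with |μ| ≥ 2√(d−1). Then the ℓ∞-norm of x is at most 1/√r. -/
/-!
Fix a vertex `i`, let `W t` be the mass of `x ^ 2` on the sphere of radius `t` about `i`, and
`C t` the sum of `x u * x v` over the edges between the spheres of radii `t` and `t + 1`.
Up to radius `r - 1` the girth makes the ball around `i` a tree: spheres span no edges and each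
vertex has a unique neighbour one level closer to `i`. Summing the eigenvalue equation over a
sphere gives `μ W 0 = C 0` and `μ W (t + 1) = C t + C (t + 1)`, while Cauchy–Schwarz, with at
most `d - 1` children per vertex below the root, gives `|C t| ≤ √(d - 1) √(W t) √(W (t + 1))`
(with `√d` for `t = 0`). As `|μ| ≥ 2 √(d - 1)`, induction on `t` yields
`|C t| ≤ √(d - 1) W (t + 1)` and `W t ≤ W (t + 1)`. So each of the `r` spheres carries mass at
least `W 0 = x i ^ 2`, whence `r x i ^ 2 ≤ ‖x‖² = 1`.
-/

open scoped RealInnerProductSpace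
open Matrix

noncomputable def matEig {n : ℕ} (A : Matrix (Fin n) (Fin n) ℝ) (hA : A.IsHermitian) (k : ℕ) : ℝ :=
  if h : k < n then ((hA.eigenvalues ∘ Tuple.sort hA.eigenvalues) (Fin.rev ⟨k, h⟩)) else 0

lemma adj_isHermitian {V : Type*} [Fintype V] [DecidableEq V] (G : SimpleGraph V)
    [DecidableRel G.Adj] :
    ((G.adjMatrix ℝ).submatrix (Fintype.equivFin V).symm (Fintype.equivFin V).symm).IsHermitian := by
  ext i j
  simp [Matrix.conjTranspose_apply, SimpleGraph.adjMatrix_apply, SimpleGraph.adj_comm]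

/-- The `k`-th largest adjacency eigenvalue of a finite simple graph (`k = 0` is the largest). -/
noncomputable def adjEig {V : Type*} [Fintype V] [DecidableEq V] (G : SimpleGraph V) (k : ℕ) : ℝ :=
  letI := Classical.decRel G.Adj
  matEig ((G.adjMatrix ℝ).submatrix (Fintype.equivFin V).symm (Fintype.equivFin V).symm)
    (adj_isHermitian G) k

open Finset

theorem level_recurrence_root_step {μ s e a₀ a₁ C : ℝ} (hs : 0 < s) (he₀ : 0 ≤ e)
    (he : e ^ 2 ≤ 2 * s ^ 2) (hμ : 2 * s ≤ |μ|) (ha₀ : 0 ≤ a₀) (ha₁ : 0 ≤ a₁)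
    (heq : μ * a₀ ^ 2 = C) (hC : |C| ≤ e * (a₀ * a₁)) :
    a₀ ≤ a₁ ∧ |C| ≤ s * a₁ ^ 2 := by
  rcases ha₀.eq_or_lt with rfl | ha₀
  · rw [← heq, zero_pow two_ne_zero, mul_zero, abs_zero]
    exact ⟨ha₁, by positivity⟩
  have hlow : 2 * s * a₀ ≤ e * a₁ := by
    have : (2 * s * a₀) * a₀ ≤ (e * a₁) * a₀ := by
      calc (2 * s * a₀) * a₀ ≤ |μ| * a₀ ^ 2 := by nlinarith
        _ = |C| := by rw [← heq, abs_mul, abs_of_nonneg (sq_nonneg a₀)]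
        _ ≤ (e * a₁) * a₀ := by linarith
    exact le_of_mul_le_mul_right this ha₀
  have he2s : e ≤ 2 * s := abs_le_of_sq_le_sq' (by nlinarith) (by positivity) |>.2
  have hea : e * a₀ ≤ s * a₁ := by
    refine le_of_mul_le_mul_left ?_ (by positivity : 0 < 2 * s)
    calc 2 * s * (e * a₀) = e * (2 * s * a₀) := by ring
      _ ≤ e * (e * a₁) := by gcongr
      _ = e ^ 2 * a₁ := by ring
      _ ≤ 2 * s ^ 2 * a₁ := by gcongr
      _ = 2 * s * (s * a₁) := by ring
  refine ⟨le_of_mul_le_mul_left (hlow.trans (by gcongr)) (by positivity : 0 < 2 * s), ?_⟩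
  calc |C| ≤ e * (a₀ * a₁) := hC
    _ = (e * a₀) * a₁ := by ring
    _ ≤ (s * a₁) * a₁ := by gcongr
    _ = s * a₁ ^ 2 := by ring

theorem level_recurrence_step {μ s a a' U U' : ℝ} (hs : 0 < s) (hμ : 2 * s ≤ |μ|)
    (ha : 0 ≤ a) (ha' : 0 ≤ a') (heq : μ * a ^ 2 = U + U')
    (hU : |U| ≤ s * a ^ 2) (hU' : |U'| ≤ s * (a * a')) :
    a ≤ a' ∧ |U'| ≤ s * a' ^ 2 := by
  have hsum : |μ| * a ^ 2 ≤ |U| + |U'| := by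
    rw [← abs_of_nonneg (sq_nonneg a), ← abs_mul, heq]
    exact abs_add_le U U'
  have hle : a ≤ a' := by
    rcases ha.eq_or_lt with rfl | ha
    · exact ha'
    have : s * (a * a) ≤ s * (a * a') := by nlinarith
    exact le_of_mul_le_mul_left (le_of_mul_le_mul_left this hs) ha
  exact ⟨hle, hU'.trans (by rw [sq]; gcongr)⟩

theorem le_of_level_recurrence {μ s e : ℝ} {a C : ℕ → ℝ} {N : ℕ} (hs : 0 < s) (he₀ : 0 ≤ e)
    (he : e ^ 2 ≤ 2 * s ^ 2) (hμ : 2 * s ≤ |μ|) (ha : ∀ t, 0 ≤ a t)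
    (heq₀ : μ * a 0 ^ 2 = C 0) (heq : ∀ t, t + 1 < N → μ * a (t + 1) ^ 2 = C t + C (t + 1))
    (hC₀ : |C 0| ≤ e * (a 0 * a 1))
    (hC : ∀ t, t + 1 < N → |C (t + 1)| ≤ s * (a (t + 1) * a (t + 2))) :
    ∀ t ≤ N, a 0 ≤ a t := by
  have step : ∀ t, t < N → a t ≤ a (t + 1) ∧ |C t| ≤ s * a (t + 1) ^ 2 := by
    intro t
    induction t with
    | zero => exact fun _ => level_recurrence_root_step hs he₀ he hμ (ha 0) (ha 1) heq₀ hC₀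
    | succ t ih =>
      exact fun ht =>
        level_recurrence_step hs hμ (ha _) (ha _) (heq t ht) (ih (by omega)).2 (hC t ht)
  intro t ht
  induction t with
  | zero => exact le_rfl
  | succ t ih => exact (ih (by omega)).trans (step t ht).1

namespace SimpleGraph

variable {V : Type*} {G : SimpleGraph V}

theorem egirth_le_length_add_length {a b : V} {p q : G.Walk a b} (hp : p.IsPath)
    (hq : q.IsPath) (hne : p ≠ q) : G.egirth ≤ p.length + q.length := by
  classical
  -- `H` is the union of the two paths: it is not acyclic, and has at most
  -- `p.length + q.length` edges.
  let H := fromEdgeSet {e | e ∈ p.edges ∨ e ∈ q.edges}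
  have hHG : H ≤ G := fun u v huv => by
    rcases (fromEdgeSet_adj _).1 huv |>.1 with h | h
    exacts [p.adj_of_mem_edges h, q.adj_of_mem_edges h]
  have mem_H : ∀ e ∈ p.edges ++ q.edges, e ∈ H.edgeSet := fun e he => by
    rw [edgeSet_fromEdgeSet]
    exact ⟨List.mem_append.1 he,
      G.not_isDiag_of_mem_edgeSet ((List.mem_append.1 he).elim (p.edges_subset_edgeSet ·)
        (q.edges_subset_edgeSet ·))⟩
  have hpH : ∀ e ∈ p.edges, e ∈ H.edgeSet := fun e he => mem_H e (List.mem_append_left _ he)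
  have hqH : ∀ e ∈ q.edges, e ∈ H.edgeSet := fun e he => mem_H e (List.mem_append_right _ he)
  obtain ⟨c, w, hw⟩ : ∃ (c : V) (w : H.Walk c c), w.IsCycle := by
    by_contra! hac
    apply hne
    have := congrArg (fun r : H.Path a b => r.1.transfer G fun e he =>
        edgeSet_mono hHG (r.1.edges_subset_edgeSet he))
      ((IsAcyclic.subsingleton_path hac a b).elim ⟨_, hp.transfer hpH⟩ ⟨_, hq.transfer hqH⟩)
    simpa only [Walk.transfer_transfer, Walk.transfer_self] using this
  have hsub : w.edges.toFinset ⊆ (p.edges ++ q.edges).toFinset := fun e he => by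
    have := w.edges_subset_edgeSet (List.mem_toFinset.1 he)
    rw [edgeSet_fromEdgeSet] at this
    exact List.mem_toFinset.2 (List.mem_append.2 this.1)
  calc G.egirth ≤ H.egirth := egirth_anti hHG
    _ ≤ w.length := egirth_le_length hw
    _ ≤ p.length + q.length := by
      rw [← Walk.length_edges, ← List.toFinset_card_of_nodup hw.edges_nodup]
      exact_mod_cast (card_le_card hsub).trans
        ((List.toFinset_card_le _).trans (by simp))

theorem exists_isPath_length_eq_of_edist_eq {u v : V} {k : ℕ} (h : G.edist u v = k) :
    ∃ p : G.Walk u v, p.IsPath ∧ p.length = k := by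
  obtain ⟨p, hp⟩ := exists_walk_of_edist_eq_coe h
  have hdist : G.dist u v = k := by
    have hr := reachable_of_edist_ne_top (h ▸ ENat.natCast_ne_top k)
    exact_mod_cast hr.coe_dist_eq_edist.trans h
  exact ⟨p, p.isPath_of_length_eq_dist (hp.trans hdist.symm), hp⟩

theorem Walk.notMem_support_of_length_le_edist {i u v : V} (p : G.Walk i v) (huv : u ≠ v)
    (h : (p.length : ℕ∞) ≤ G.edist i u) : u ∉ p.support := fun hu => by
  classical
  have := (G.edist_le (p.takeUntil u hu)).trans_lt
    (Nat.cast_lt.2 (p.length_takeUntil_lt_length hu huv))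
  exact this.not_ge h

theorem edist_le_edist_add_one_of_adj {i u v : V} (h : G.Adj u v) :
    G.edist i v ≤ G.edist i u + 1 :=
  G.edist_triangle.trans (by gcongr; exact (edist_eq_one_iff_adj.2 h).le)

theorem Walk.IsPath.concat_of_length_le_edist {i u v : V} {p : G.Walk i v} (hp : p.IsPath)
    (h : G.Adj v u) (hlen : (p.length : ℕ∞) ≤ G.edist i u) : (p.concat h).IsPath :=
  hp.concat (p.notMem_support_of_length_le_edist h.ne' hlen) h

section crossSum

variable [DecidableRel G.Adj]

variable (G) in
def crossSum (x : V → ℝ) (A B : Finset V) : ℝ :=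
  ∑ u ∈ A, ∑ v ∈ B with G.Adj u v, x u * x v

theorem sum_sum_filter_adj_comm {M : Type*} [AddCommMonoid M] (A B : Finset V)
    (f : V → V → M) :
    ∑ u ∈ A, ∑ v ∈ B with G.Adj u v, f u v = ∑ v ∈ B, ∑ u ∈ A with G.Adj v u, f u v := by
  simp only [sum_filter]
  rw [sum_comm]
  simp only [adj_comm]

theorem crossSum_comm (x : V → ℝ) (A B : Finset V) : G.crossSum x A B = G.crossSum x B A := by
  rw [crossSum, sum_sum_filter_adj_comm]
  simp only [crossSum, mul_comm]

theorem crossSum_union_right [DecidableEq V] (x : V → ℝ) (A : Finset V) {B C : Finset V}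
    (h : Disjoint B C) : G.crossSum x A (B ∪ C) = G.crossSum x A B + G.crossSum x A C := by
  simp only [crossSum, filter_union, sum_union (disjoint_filter_filter h), sum_add_distrib]

theorem mul_sum_sq_eq_crossSum [Fintype V] {μ : ℝ} {x : V → ℝ}
    (heig : G.adjMatrix ℝ *ᵥ x = μ • x) {A B : Finset V} (hA : ∀ v ∈ A, G.neighborFinset v ⊆ B) :
    μ * ∑ v ∈ A, x v ^ 2 = G.crossSum x A B := by
  rw [crossSum, mul_sum]
  refine sum_congr rfl fun v hv => ?_
  have hB : {u ∈ B | G.Adj v u} = G.neighborFinset v := by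
    ext u
    simpa [mem_neighborFinset] using fun h => hA v hv ((mem_neighborFinset ..).2 h)
  rw [hB, ← mul_sum, ← adjMatrix_mulVec_apply, heig, Pi.smul_apply, smul_eq_mul]
  ring

theorem sum_sum_filter_adj_le {m : ℕ} (f : V → ℝ) (hf : ∀ u, 0 ≤ f u) {A B : Finset V}
    (h : ∀ u ∈ A, #{v ∈ B | G.Adj u v} ≤ m) :
    ∑ u ∈ A, ∑ v ∈ B with G.Adj u v, f u ≤ m * ∑ u ∈ A, f u := by
  rw [mul_sum]
  refine sum_le_sum fun u hu => ?_
  rw [sum_const, nsmul_eq_mul]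
  exact mul_le_mul_of_nonneg_right (by exact_mod_cast h u hu) (hf u)

theorem crossSum_sq_le {m n : ℕ} (x : V → ℝ) {A B : Finset V}
    (hA : ∀ u ∈ A, #{v ∈ B | G.Adj u v} ≤ m) (hB : ∀ v ∈ B, #{u ∈ A | G.Adj v u} ≤ n) :
    G.crossSum x A B ^ 2 ≤ m * n * (∑ u ∈ A, x u ^ 2) * ∑ v ∈ B, x v ^ 2 := by
  let E := A.sigma fun u => {v ∈ B | G.Adj u v}
  have hcs := sum_mul_sq_le_sq_mul_sq E (fun p => x p.1) (fun p => x p.2)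
  simp only [E, sum_sigma] at hcs
  rw [sum_sum_filter_adj_comm A B fun _ v => x v ^ 2] at hcs
  calc G.crossSum x A B ^ 2 ≤ _ := hcs
    _ ≤ (m * ∑ u ∈ A, x u ^ 2) * (n * ∑ v ∈ B, x v ^ 2) :=
      mul_le_mul (sum_sum_filter_adj_le _ (fun _ => sq_nonneg _) hA)
        (sum_sum_filter_adj_le _ (fun _ => sq_nonneg _) hB)
        (sum_nonneg fun _ _ => sum_nonneg fun _ _ => sq_nonneg _) (by positivity)
    _ = _ := by ring

theorem abs_crossSum_le {m n : ℕ} (x : V → ℝ) {A B : Finset V}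
    (hA : ∀ u ∈ A, #{v ∈ B | G.Adj u v} ≤ m) (hB : ∀ v ∈ B, #{u ∈ A | G.Adj v u} ≤ n) :
    |G.crossSum x A B| ≤ √(m * n) * (√(∑ u ∈ A, x u ^ 2) * √(∑ v ∈ B, x v ^ 2)) := by
  rw [← Real.sqrt_mul (sum_nonneg fun _ _ => sq_nonneg _), ← Real.sqrt_mul (by positivity),
    ← mul_assoc]
  exact Real.abs_le_sqrt (crossSum_sq_le x hA hB)

end crossSum

variable [Fintype V]

noncomputable def sphere (G : SimpleGraph V) (i : V) (t : ℕ) : Finset V :=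
  {v | G.edist i v = t}

variable {i u v : V} {t : ℕ}

@[simp]
theorem mem_sphere : v ∈ G.sphere i t ↔ G.edist i v = t := by
  simp [sphere]

theorem sphere_zero [DecidableEq V] : G.sphere i 0 = {i} := by
  ext v
  rw [mem_sphere, Nat.cast_zero, edist_eq_zero_iff, mem_singleton, eq_comm]

theorem disjoint_sphere {s : ℕ} (h : t ≠ s) : Disjoint (G.sphere i t) (G.sphere i s) :=
  Finset.disjoint_left.2 fun _ ht hs =>
    h (by simpa using (mem_sphere.1 ht).symm.trans (mem_sphere.1 hs))

theorem exists_adj_mem_sphere (hu : u ∈ G.sphere i (t + 1)) : ∃ v ∈ G.sphere i t, G.Adj u v := by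
  obtain ⟨p, hp⟩ := exists_walk_of_edist_eq_coe (mem_sphere.1 hu)
  have hnil : ¬ p.Nil := by simp [← Walk.length_eq_zero_iff, hp]
  refine ⟨p.penultimate, mem_sphere.2 (le_antisymm ?_ ?_), (p.adj_penultimate hnil).symm⟩
  · simpa [Walk.length_dropLast, hp] using G.edist_le p.dropLast
  · have := (mem_sphere.1 hu).symm.trans_le
      (edist_le_edist_add_one_of_adj (i := i) (p.adj_penultimate hnil))
    exact (ENat.add_le_add_iff_right ENat.one_ne_top).1 (by simpa using this)

theorem mem_sphere_of_adj (hv : v ∈ G.sphere i (t + 1)) (h : G.Adj v u) :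
    u ∈ G.sphere i t ∨ u ∈ G.sphere i (t + 1) ∨ u ∈ G.sphere i (t + 2) := by
  have hv := mem_sphere.1 hv
  have hup : G.edist i u ≤ t + 2 := by
    simpa [hv, add_assoc, one_add_one_eq_two] using edist_le_edist_add_one_of_adj (i := i) h
  have hlow : G.edist i v ≤ G.edist i u + 1 := edist_le_edist_add_one_of_adj h.symm
  obtain ⟨k, hk⟩ := ENat.ne_top_iff_exists.1 (ne_top_of_le_ne_top (by simp) hup)
  rw [← hk] at hup hlow
  rw [hv] at hlow
  simp only [mem_sphere, ← hk]
  norm_cast at hup hlow ⊢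
  omega

theorem not_adj_of_mem_sphere (hg : ((2 * t + 1 : ℕ) : ℕ∞) < G.egirth)
    (hu : u ∈ G.sphere i t) (hv : v ∈ G.sphere i t) : ¬ G.Adj u v := fun h => by
  obtain ⟨p, hp, hpl⟩ := exists_isPath_length_eq_of_edist_eq (mem_sphere.1 hu)
  obtain ⟨q, hq, hql⟩ := exists_isPath_length_eq_of_edist_eq (mem_sphere.1 hv)
  have hq' := hq.concat_of_length_le_edist h.symm (by rw [hql, mem_sphere.1 hu])
  have hne : p ≠ q.concat h.symm := fun he => by
    simpa [hpl, hql] using congrArg Walk.length he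
  have := egirth_le_length_add_length hp hq' hne
  rw [Walk.length_concat, hpl, hql] at this
  exact hg.not_ge (this.trans_eq (by push_cast; ring))

theorem neighborFinset_subset_sphere_one [DecidableRel G.Adj] :
    G.neighborFinset i ⊆ G.sphere i 1 := fun _ hu =>
  mem_sphere.2 (by simpa using edist_eq_one_iff_adj.2 ((mem_neighborFinset ..).1 hu))

theorem neighborFinset_subset_sphere_union [DecidableEq V] [DecidableRel G.Adj]
    (hg : ((2 * t + 3 : ℕ) : ℕ∞) < G.egirth) (hv : v ∈ G.sphere i (t + 1)) :
    G.neighborFinset v ⊆ G.sphere i t ∪ G.sphere i (t + 2) := fun u hu => by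
  have h := (mem_neighborFinset ..).1 hu
  rcases mem_sphere_of_adj hv h with h' | h' | h'
  · exact mem_union_left _ h'
  · exact absurd h (not_adj_of_mem_sphere hg hv h')
  · exact mem_union_right _ h'

theorem card_filter_adj_le_degree [DecidableRel G.Adj] (A : Finset V) (v : V) :
    #{u ∈ A | G.Adj v u} ≤ G.degree v :=
  (card_le_card fun _ hu => (mem_neighborFinset ..).2 (mem_filter.1 hu).2).trans_eq
    (card_neighborFinset_eq_degree ..)

theorem card_filter_adj_sphere_le_one [DecidableRel G.Adj]
    (hg : ((2 * t + 2 : ℕ) : ℕ∞) < G.egirth) (hu : u ∈ G.sphere i (t + 1)) :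
    #{v ∈ G.sphere i t | G.Adj u v} ≤ 1 := by
  refine card_le_one.2 fun v₁ h₁ v₂ h₂ => ?_
  rw [mem_filter] at h₁ h₂
  by_contra hne
  obtain ⟨p₁, hp₁, hl₁⟩ := exists_isPath_length_eq_of_edist_eq (mem_sphere.1 h₁.1)
  obtain ⟨p₂, hp₂, hl₂⟩ := exists_isPath_length_eq_of_edist_eq (mem_sphere.1 h₂.1)
  have hlen : ∀ v (p : G.Walk i v), p.length = t → (p.length : ℕ∞) ≤ G.edist i u := by
    intro v p hp
    rw [hp, mem_sphere.1 hu]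
    exact_mod_cast t.le_succ
  have := egirth_le_length_add_length (hp₁.concat_of_length_le_edist h₁.2.symm (hlen _ _ hl₁))
    (hp₂.concat_of_length_le_edist h₂.2.symm (hlen _ _ hl₂))
    fun he => hne (Walk.concat_inj he).1
  rw [Walk.length_concat, Walk.length_concat, hl₁, hl₂] at this
  exact hg.not_ge (this.trans_eq (by push_cast; ring))

theorem card_filter_adj_sphere_succ_lt_degree [DecidableEq V] [DecidableRel G.Adj]
    (hv : v ∈ G.sphere i (t + 1)) : #{u ∈ G.sphere i (t + 2) | G.Adj v u} < G.degree v := by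
  obtain ⟨w, hw, hvw⟩ := exists_adj_mem_sphere hv
  rw [← card_neighborFinset_eq_degree]
  refine card_lt_card ((ssubset_iff_of_subset fun u hu => ?_).2 ⟨w, ?_, fun hw' => ?_⟩)
  · exact (mem_neighborFinset ..).2 (mem_filter.1 hu).2
  · exact (mem_neighborFinset ..).2 hvw
  · exact Finset.disjoint_left.1 (disjoint_sphere (by omega)) hw (mem_filter.1 hw').1

theorem sum_sum_sphere_le [DecidableEq V] {f : V → ℝ} (hf : ∀ v, 0 ≤ f v) (i : V)
    (s : Finset ℕ) : ∑ t ∈ s, ∑ v ∈ G.sphere i t, f v ≤ ∑ v, f v := by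
  rw [← sum_biUnion fun t _ t' _ h => disjoint_sphere h]
  exact sum_le_univ_sum_of_nonneg hf

section eigenvector

variable [DecidableEq V] [DecidableRel G.Adj] {μ : ℝ} {x : V → ℝ}

theorem mul_sum_sphere_zero_eq (heig : G.adjMatrix ℝ *ᵥ x = μ • x) (i : V) :
    μ * ∑ v ∈ G.sphere i 0, x v ^ 2 = G.crossSum x (G.sphere i 0) (G.sphere i 1) := by
  refine mul_sum_sq_eq_crossSum heig fun v hv => ?_
  rw [sphere_zero, mem_singleton] at hv
  exact hv ▸ neighborFinset_subset_sphere_one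

theorem mul_sum_sphere_succ_eq (heig : G.adjMatrix ℝ *ᵥ x = μ • x)
    (hg : ((2 * t + 3 : ℕ) : ℕ∞) < G.egirth) :
    μ * ∑ v ∈ G.sphere i (t + 1), x v ^ 2 =
      G.crossSum x (G.sphere i t) (G.sphere i (t + 1)) +
        G.crossSum x (G.sphere i (t + 1)) (G.sphere i (t + 2)) := by
  rw [mul_sum_sq_eq_crossSum heig fun v hv => neighborFinset_subset_sphere_union hg hv,
    crossSum_union_right _ _ (disjoint_sphere (by omega)), crossSum_comm]

theorem sq_le_sum_sphere {d N : ℕ} (heig : G.adjMatrix ℝ *ᵥ x = μ • x) (hd : 2 ≤ d)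
    (hdeg : G.maxDegree ≤ d) (hμ : 2 * √(d - 1) ≤ |μ|)
    (hg : ((2 * N + 1 : ℕ) : ℕ∞) ≤ G.egirth) (i : V) :
    ∀ t ≤ N, x i ^ 2 ≤ ∑ v ∈ G.sphere i t, x v ^ 2 := by
  set W : ℕ → ℝ := fun t => ∑ v ∈ G.sphere i t, x v ^ 2
  have hW : ∀ t, 0 ≤ W t := fun t => sum_nonneg fun _ _ => sq_nonneg _
  have hW₀ : W 0 = x i ^ 2 := by simp [W, sphere_zero]
  have hdeg' : ∀ v, G.degree v ≤ d := fun v => (G.degree_le_maxDegree v).trans hdeg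
  have hdR : (2 : ℝ) ≤ d := by exact_mod_cast hd
  have hgt : ∀ m ≤ 2 * N, (m : ℕ∞) < G.egirth := fun m hm =>
    (Nat.cast_lt.2 (by omega)).trans_le hg
  have heq₀ : μ * √(W 0) ^ 2 = G.crossSum x (G.sphere i 0) (G.sphere i 1) := by
    simpa only [Real.sq_sqrt (hW 0)] using mul_sum_sphere_zero_eq heig i
  have heq : ∀ t, t + 1 < N → μ * √(W (t + 1)) ^ 2 =
      G.crossSum x (G.sphere i t) (G.sphere i (t + 1)) +
        G.crossSum x (G.sphere i (t + 1)) (G.sphere i (t + 2)) := fun t ht => by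
    simpa only [Real.sq_sqrt (hW _)] using mul_sum_sphere_succ_eq heig (hgt _ (by omega))
  have hC₀ : |G.crossSum x (G.sphere i 0) (G.sphere i 1)| ≤ √d * (√(W 0) * √(W 1)) := by
    simpa using abs_crossSum_le x (n := 1)
      (fun v _ => (card_filter_adj_le_degree _ v).trans (hdeg' v))
      fun u _ => (card_filter_le _ _).trans (by simp [sphere_zero])
  have hC : ∀ t, t + 1 < N → |G.crossSum x (G.sphere i (t + 1)) (G.sphere i (t + 2))| ≤
      √(d - 1) * (√(W (t + 1)) * √(W (t + 2))) := fun t ht => by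
    have h := abs_crossSum_le (A := G.sphere i (t + 1)) (B := G.sphere i (t + 2)) x
      (fun v hv => Nat.le_sub_one_of_lt
        ((card_filter_adj_sphere_succ_lt_degree hv).trans_le (hdeg' v)))
      fun u hu => card_filter_adj_sphere_le_one (hgt _ (by omega)) hu
    rwa [Nat.cast_sub (by omega), Nat.cast_one, mul_one] at h
  have hmono := le_of_level_recurrence (a := fun t => √(W t)) (Real.sqrt_pos.2 (by linarith))
    (Real.sqrt_nonneg d) (by rw [Real.sq_sqrt, Real.sq_sqrt] <;> linarith) hμ
    (fun _ => Real.sqrt_nonneg _) heq₀ heq hC₀ hC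
  intro t ht
  simpa [← hW₀, Real.sqrt_le_sqrt_iff (hW t), W] using hmono t ht

end eigenvector

end SimpleGraph

open SimpleGraph

/-- delocalization of eigenvectors of high-girth bounded degree graphs:
if `G` has maximum degree `d ≥ 2` and girth at least `2r-1`, and `x` is a unit eigenvector
for an eigenvalue `μ` with `|μ| ≥ 2√(d-1)`, then `‖x‖_∞ ≤ 1/√r`. -/
theorem eigenvector_delocalization
    (n d r : ℕ) (hd : 2 ≤ d) (hr : 1 ≤ r)
    (G : SimpleGraph (Fin n)) [DecidableRel G.Adj]
    (hdeg : G.maxDegree ≤ d)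
    (hgirth : ((2 * r - 1 : ℕ) : ℕ∞) ≤ G.girth)
    (μ : ℝ) (x : Fin n → ℝ)
    (hx : ∑ i, x i ^ 2 = 1)
    (heig : G.adjMatrix ℝ *ᵥ x = μ • x)
    (hμ : 2 * Real.sqrt (d - 1) ≤ |μ|) :
    ∀ i, |x i| ≤ 1 / Real.sqrt r := by
  intro i
  have hg : ((2 * (r - 1) + 1 : ℕ) : ℕ∞) ≤ G.egirth := by
    rw [show 2 * (r - 1) + 1 = 2 * r - 1 by omega]
    exact hgirth.trans (ENat.natCast_toNat_le_self _)
  have hlevel := sq_le_sum_sphere heig hd hdeg hμ hg i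
  have hsum : (r : ℝ) * x i ^ 2 ≤ 1 := calc
    (r : ℝ) * x i ^ 2 = ∑ _t ∈ range r, x i ^ 2 := by simp
    _ ≤ ∑ t ∈ range r, ∑ v ∈ G.sphere i t, x v ^ 2 :=
      sum_le_sum fun t ht => hlevel t (by rw [mem_range] at ht; omega)
    _ ≤ ∑ v, x v ^ 2 := sum_sum_sphere_le (fun _ => sq_nonneg _) i _
    _ = 1 := hx
  have hr' : (0 : ℝ) < r := by exact_mod_cast hr
  rw [one_div, ← Real.sqrt_inv]
  exact Real.abs_le_sqrt (by rw [← one_div, le_div_iff₀ hr']; linarith)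
end

section
/- Let G be a d-regular graph on n vertices whose vertex set is partitioned into two equal halves B and C such that the number of edges with both endpoints in B plus the number with both endpoints in C is at most m. Then the smallest adjacency eigenvalue of G satisfies λ_n(G) ≤ −d + 4m/n. -/
open scoped RealInnerProductSpace
open Matrix

/-! The signed indicator `y` of `B` (`+1` on `B`, `-1` off it) has `y ⬝ᵥ y = n`, and each edge
`uv` contributes `2 y_u y_v = ±2` to `y ⬝ᵥ A y`: `+2` if it lies inside `B` or inside `Bᶜ`, `-2` if
it crosses. With `nd/2` edges in total this gives `y ⬝ᵥ A y ≤ 4m - nd`, and the smallest eigenvalue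
is at most the Rayleigh quotient `y ⬝ᵥ A y / y ⬝ᵥ y ≤ (4m - nd) / n`. -/

theorem Matrix.IsHermitian.mul_dotProduct_self_le_dotProduct_mulVec {ι : Type*} [Fintype ι]
    [DecidableEq ι] {A : Matrix ι ι ℝ} (hA : A.IsHermitian) {c : ℝ} (hc : ∀ i, c ≤ hA.eigenvalues i)
    (x : ι → ℝ) : c * (x ⬝ᵥ x) ≤ x ⬝ᵥ A *ᵥ x := by
  have hpsd : (A - algebraMap ℝ _ c).PosSemidef := by
    refine posSemidef_iff_isHermitian_and_spectrum_nonneg.mpr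
      ⟨hA.sub (IsSelfAdjoint.algebraMap _ (.all c)), ?_⟩
    rw [← spectrum.sub_singleton_eq, hA.spectrum_real_eq_range_eigenvalues]
    rintro _ ⟨_, ⟨i, rfl⟩, _, rfl, rfl⟩
    exact sub_nonneg.mpr (hc i)
  have := hpsd.dotProduct_mulVec_nonneg x
  simp only [star_trivial, sub_mulVec, dotProduct_sub, Algebra.algebraMap_eq_smul_one,
    smul_mulVec, one_mulVec, dotProduct_smul, smul_eq_mul] at this
  linarith

lemma matEig_pred_le_eigenvalues {n : ℕ} (hn : 0 < n) {A : Matrix (Fin n) (Fin n) ℝ}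
    (hA : A.IsHermitian) (i : Fin n) : matEig A hA (n - 1) ≤ hA.eigenvalues i := by
  have hlast : n - 1 < n := Nat.sub_lt hn one_pos
  have hrev : Fin.rev ⟨n - 1, hlast⟩ = ⟨0, hn⟩ := by ext; simp; omega
  rw [matEig, dif_pos hlast, hrev]
  simpa using Tuple.monotone_sort hA.eigenvalues (a := ⟨0, hn⟩)
    (b := (Tuple.sort hA.eigenvalues).symm i) (Nat.zero_le _)

theorem adjEig_card_pred_mul_dotProduct_self_le {V : Type*} [Fintype V] [DecidableEq V]
    (G : SimpleGraph V) [DecidableRel G.Adj] (hV : 0 < Fintype.card V) (x : V → ℝ) :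
    adjEig G (Fintype.card V - 1) * (x ⬝ᵥ x) ≤ x ⬝ᵥ G.adjMatrix ℝ *ᵥ x := by
  set e := (Fintype.equivFin V).symm
  have h := (adj_isHermitian G).mul_dotProduct_self_le_dotProduct_mulVec
    (matEig_pred_le_eigenvalues hV (adj_isHermitian G)) (x ∘ e)
  rw [submatrix_mulVec_equiv, ← dotProduct_comp_equiv_symm, comp_equiv_symm_dotProduct] at h
  simp only [e, Equiv.symm_symm, Function.comp_assoc, Equiv.symm_comp_self,
    Function.comp_id] at h
  convert h using 2
  unfold adjEig
  congr!

open Classical in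
noncomputable def signVec {V : Type*} (S : Set V) : V → ℝ := fun u => if u ∈ S then 1 else -1

lemma signVec_dotProduct_self {V : Type*} [Fintype V] (S : Set V) :
    signVec S ⬝ᵥ signVec S = Fintype.card V := by
  have h : ∀ u, signVec S u * signVec S u = 1 := fun u => by
    by_cases hu : u ∈ S <;> simp [signVec, hu]
  simp [dotProduct, h]

namespace SimpleGraph

variable {V : Type*}

def internalEdges (G : SimpleGraph V) (S : Set V) : Set (Sym2 V) :=
  {e ∈ G.edgeSet | ∃ a ∈ S, ∃ b ∈ S, e = s(a, b)}

lemma mk_mem_internalEdges {G : SimpleGraph V} {S : Set V} {u v : V} :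
    s(u, v) ∈ G.internalEdges S ↔ G.Adj u v ∧ u ∈ S ∧ v ∈ S := by
  simp only [internalEdges, Set.mem_ofPred_eq, mem_edgeSet, Sym2.eq_iff]
  constructor
  · rintro ⟨h, a, ha, b, hb, ⟨rfl, rfl⟩ | ⟨rfl, rfl⟩⟩
    exacts [⟨h, ha, hb⟩, ⟨h, hb, ha⟩]
  · rintro ⟨h, hu, hv⟩
    exact ⟨h, u, hu, v, hv, .inl ⟨rfl, rfl⟩⟩

lemma edgeSet_fromEdgeSet_internalEdges (G : SimpleGraph V) (S : Set V) :
    (fromEdgeSet (G.internalEdges S)).edgeSet = G.internalEdges S :=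
  edgeSet_fromEdgeSet _ ▸ sdiff_eq_left.mpr
    ((Set.subset_compl_iff_disjoint_right.mp G.edgeSet_subset_compl_diagSet).mono_left
      (Set.sep_subset _ _))

variable [Fintype V]

theorem sum_sum_ite_adj (G : SimpleGraph V) [DecidableRel G.Adj] :
    ∑ u, ∑ v, (if G.Adj u v then (1 : ℝ) else 0) = 2 * G.edgeFinset.card := by
  simp_rw [Finset.sum_boole, ← neighborFinset_eq_filter, card_neighborFinset_eq_degree]
  exact_mod_cast G.sum_degrees_eq_twice_card_edges

theorem sum_sum_ite_adj_mem_mem (G : SimpleGraph V) [DecidableRel G.Adj] (S : Set V)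
    [DecidablePred (· ∈ S)] :
    ∑ u, ∑ v, (if G.Adj u v ∧ u ∈ S ∧ v ∈ S then (1 : ℝ) else 0) =
      2 * (G.internalEdges S).ncard := by
  classical
  have h := (fromEdgeSet (G.internalEdges S)).sum_sum_ite_adj
  simp only [fromEdgeSet_adj, mk_mem_internalEdges] at h
  rw [← Set.ncard_coe_finset, coe_edgeFinset, edgeSet_fromEdgeSet_internalEdges] at h
  convert h using 4 with u - v
  exact (and_iff_left_of_imp fun h => h.1.ne).symm

theorem signVec_dotProduct_adjMatrix_mulVec (G : SimpleGraph V) [DecidableRel G.Adj]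
    (S : Set V) :
    signVec S ⬝ᵥ G.adjMatrix ℝ *ᵥ signVec S =
      4 * ((G.internalEdges S).ncard + (G.internalEdges Sᶜ).ncard) - 2 * G.edgeFinset.card := by
  classical
  have hpt : ∀ u v, (if G.Adj u v then signVec S u * signVec S v else 0) =
      2 * ((if G.Adj u v ∧ u ∈ S ∧ v ∈ S then 1 else 0) +
        (if G.Adj u v ∧ u ∈ Sᶜ ∧ v ∈ Sᶜ then 1 else 0)) - (if G.Adj u v then 1 else 0) := by
    intro u v
    by_cases h : G.Adj u v <;> by_cases hu : u ∈ S <;> by_cases hv : v ∈ S <;>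
      simp [signVec, h, hu, hv] <;> norm_num
  simp only [dotProduct_mulVec_adjMatrix, hpt, Finset.sum_sub_distrib, Finset.sum_add_distrib,
    ← Finset.mul_sum, sum_sum_ite_adj_mem_mem, sum_sum_ite_adj]
  ring

end SimpleGraph

theorem few_internal_edges_smallest_eigenvalue_general
    (n d m : ℕ) (hn : 0 < n)
    (G : SimpleGraph (Fin n)) [DecidableRel G.Adj]
    (hreg : G.IsRegularOfDegree d)
    (B : Set (Fin n))
    (hm : {e ∈ G.edgeSet | ∃ a ∈ B, ∃ b ∈ B, e = s(a, b)}.ncard +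
          {e ∈ G.edgeSet | ∃ a ∈ Bᶜ, ∃ b ∈ Bᶜ, e = s(a, b)}.ncard ≤ m) :
    adjEig G (n - 1) ≤ -(d : ℝ) + 4 * m / n := by
  have hray := adjEig_card_pred_mul_dotProduct_self_le G (by simpa using hn) (signVec B)
  rw [signVec_dotProduct_self, G.signVec_dotProduct_adjMatrix_mulVec, Fintype.card_fin] at hray
  have hedges : (2 * G.edgeFinset.card : ℝ) = n * d := by
    rw [← Nat.cast_ofNat, ← Nat.cast_mul, ← G.sum_degrees_eq_twice_card_edges]
    simp [hreg.degree_eq]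
  have hm' : ((G.internalEdges B).ncard + (G.internalEdges Bᶜ).ncard : ℝ) ≤ m := by
    exact_mod_cast hm
  have hn' : (0 : ℝ) < n := by exact_mod_cast hn
  rw [show -(d : ℝ) + 4 * m / n = (4 * m - n * d) / n by field_simp; ring, le_div_iff₀ hn']
  linarith

/-- if a `d`-regular graph on `n` vertices has a balanced bipartition `B, Bᶜ`
with at most `m` non-crossing edges, then `λ_n(G) ≤ -d + 4m/n`. -/
theorem few_internal_edges_smallest_eigenvalue
    (n d m : ℕ) (hn : 0 < n)
    (G : SimpleGraph (Fin n)) [DecidableRel G.Adj]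
    (hreg : G.IsRegularOfDegree d)
    (B : Set (Fin n)) (hB : 2 * B.ncard = n)
    (hm : {e ∈ G.edgeSet | ∃ a ∈ B, ∃ b ∈ B, e = s(a, b)}.ncard +
          {e ∈ G.edgeSet | ∃ a ∈ Bᶜ, ∃ b ∈ Bᶜ, e = s(a, b)}.ncard ≤ m) :
    adjEig G (n - 1) ≤ -(d : ℝ) + 4 * m / n :=
  few_internal_edges_smallest_eigenvalue_general n d m hn G hreg B hm
end

section
/- Fix d ≥ 3 and λ > 2√(d−1). Define a_i(λ) = (α^{i+1} − β^{i+1})/(α − β), where α = (λ + √(λ²−4(d−1)))/2 and β = (λ − √(λ²−4(d−1)))/2. Let G be a graph containing a vertex v such that some connected component of G ∖ {v} is a complete (d−1)-ary tree T with ℓ+1 levels whose root is the unique neighbor of v in T. If λ is an eigenvalue of G with eigenvector w, then w is radial on T (vertices at equal distance from the root have equal entries), and if the leaves of T carry value x, then vertices of T at distance ℓ−i from the root carry value a_i(λ)·x for every 0 ≤ i ≤ ℓ. -/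
open scoped RealInnerProductSpace
open Matrix

/-!
Let `u` be a tree vertex at level `i ≥ 1` with parent `p`, and write `U` for the Lucas sequence
`U_{n+2} = λ U_{n+1} - (d-1) U_n`, `U_0 = 0`, `U_1 = 1`, so that `a_i = U_{i+1}`. Downward
induction on `i` gives `U_{ℓ-i+2} w(u) = U_{ℓ-i+1} w(p)`: at a leaf the eigenvalue equation reads
`λ w(u) = w(p)`, and at an inner vertex the `d-1` children together contribute
`(d-1) (U_{ℓ-i} / U_{ℓ-i+1}) w(u)` by induction, which the recurrence turns into the claim.
Since `U_n > 0` for `n ≥ 1`, the value at `u` is a fixed multiple of the value at its parent; this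
gives radiality from the root downwards and the formula `w = U_{i+1} x` from the leaves upwards.
-/

/-- The Lucas sequence `U_n(P, Q) = (α^n - β^n) / (α - β)`, where `α, β` are the roots of
`t² - P t + Q`; it is identically `0` when the discriminant is not positive. -/
noncomputable def lucasU (P Q : ℝ) (n : ℕ) : ℝ :=
  (((P + Real.sqrt (P ^ 2 - 4 * Q)) / 2) ^ n - ((P - Real.sqrt (P ^ 2 - 4 * Q)) / 2) ^ n) /
    Real.sqrt (P ^ 2 - 4 * Q)

section Lucas

variable {P Q : ℝ}

@[simp]
lemma lucasU_zero : lucasU P Q 0 = 0 := by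
  simp [lucasU]

lemma lucasU_one (hdisc : 0 < P ^ 2 - 4 * Q) : lucasU P Q 1 = 1 := by
  have hs : Real.sqrt (P ^ 2 - 4 * Q) ≠ 0 := (Real.sqrt_pos.2 hdisc).ne'
  simp only [lucasU, pow_one]
  rw [div_eq_one_iff_eq hs]
  ring

lemma lucasU_add_two (n : ℕ) :
    lucasU P Q (n + 2) = P * lucasU P Q (n + 1) - Q * lucasU P Q n := by
  set s := Real.sqrt (P ^ 2 - 4 * Q)
  rcases eq_or_ne s 0 with hs | hs
  · simp [lucasU, s, hs]
  have hs2 : s ^ 2 = P ^ 2 - 4 * Q :=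
    Real.sq_sqrt (Real.sqrt_ne_zero'.1 hs).le
  have root : ∀ t, t ^ 2 = P * t - Q → t ^ (n + 2) = P * t ^ (n + 1) - Q * t ^ n := fun t ht => by
    linear_combination t ^ n * ht
  simp only [lucasU]
  rw [root ((P + s) / 2) (by linear_combination hs2 / 4),
    root ((P - s) / 2) (by linear_combination hs2 / 4)]
  ring

lemma lucasU_succ_pos (hP : 0 < P) (hdisc : 0 < P ^ 2 - 4 * Q) (n : ℕ) :
    0 < lucasU P Q (n + 1) := by
  set s := Real.sqrt (P ^ 2 - 4 * Q)
  have hs : 0 < s := Real.sqrt_pos.2 hdisc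
  have hβ : |(P - s) / 2| < (P + s) / 2 := abs_lt.2 ⟨by linarith, by linarith⟩
  have hpow : ((P - s) / 2) ^ (n + 1) < ((P + s) / 2) ^ (n + 1) :=
    calc ((P - s) / 2) ^ (n + 1) ≤ |(P - s) / 2| ^ (n + 1) := by
          rw [← abs_pow]; exact le_abs_self _
      _ < ((P + s) / 2) ^ (n + 1) := pow_lt_pow_left₀ hβ (abs_nonneg _) n.succ_ne_zero
  exact div_pos (sub_pos.2 hpow) hs

end Lucas

/-- `X 0, …, X ℓ` are the levels of a complete `k`-ary tree with `ℓ + 1` levels inside `G`.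
Nothing is required of the neighbours of level `0`, so the tree may hang from the rest of `G`. -/
structure IsCompleteTreeLevels {W : Type*} [DecidableEq W] (G : SimpleGraph W) [DecidableRel G.Adj]
    (X : ℕ → Finset W) (ℓ k : ℕ) : Prop where
  disjoint : ∀ i j, i ≤ ℓ → j ≤ ℓ → i ≠ j → Disjoint (X i) (X j)
  card_children : ∀ i, i < ℓ → ∀ u ∈ X i, ((X (i + 1)).filter (G.Adj u)).card = k
  existsUnique_parent : ∀ i, 1 ≤ i → i ≤ ℓ → ∀ u ∈ X i, ∃! p, p ∈ X (i - 1) ∧ G.Adj u p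
  mem_of_adj : ∀ i, 1 ≤ i → i ≤ ℓ → ∀ u ∈ X i, ∀ u', G.Adj u u' → u' ∈ X (i - 1) ∪ X (i + 1)
  top_eq_empty : X (ℓ + 1) = ∅

namespace IsCompleteTreeLevels

variable {W : Type*} [DecidableEq W] {G : SimpleGraph W} [DecidableRel G.Adj]
  {X : ℕ → Finset W} {ℓ k i : ℕ} {u p : W}

lemma neighborFinset_eq_insert [Fintype W] (hT : IsCompleteTreeLevels G X ℓ k) (hi : 1 ≤ i) (hiℓ : i ≤ ℓ)
    (hu : u ∈ X i) (hp : p ∈ X (i - 1)) (hup : G.Adj u p) :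
    G.neighborFinset u = insert p ((X (i + 1)).filter (G.Adj u)) := by
  ext u'
  simp only [SimpleGraph.mem_neighborFinset, Finset.mem_insert, Finset.mem_filter]
  constructor
  · intro huu'
    rcases Finset.mem_union.1 (hT.mem_of_adj i hi hiℓ u hu u' huu') with h | h
    · exact .inl ((hT.existsUnique_parent i hi hiℓ u hu).unique ⟨h, huu'⟩ ⟨hp, hup⟩)
    · exact .inr ⟨h, huu'⟩
  · rintro (rfl | ⟨-, huu'⟩)
    exacts [hup, huu']

lemma not_mem_children (hT : IsCompleteTreeLevels G X ℓ k) (hi : 1 ≤ i) (hiℓ : i ≤ ℓ)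
    (hp : p ∈ X (i - 1)) : p ∉ (X (i + 1)).filter (G.Adj u) := by
  intro hpc
  have hp' : p ∈ X (i + 1) := (Finset.mem_filter.1 hpc).1
  rcases hiℓ.lt_or_eq with hlt | rfl
  · exact Finset.disjoint_left.1 (hT.disjoint (i - 1) (i + 1) (by omega) hlt (by omega)) hp hp'
  · simp [hT.top_eq_empty] at hp'

lemma eigen_eq_parent_add_children [Fintype W] (hT : IsCompleteTreeLevels G X ℓ k) {lam : ℝ} {w : W → ℝ}
    (heig : G.adjMatrix ℝ *ᵥ w = lam • w) (hi : 1 ≤ i) (hiℓ : i ≤ ℓ)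
    (hu : u ∈ X i) (hp : p ∈ X (i - 1)) (hup : G.Adj u p) :
    lam * w u = w p + ∑ c ∈ (X (i + 1)).filter (G.Adj u), w c := by
  have h := congrFun heig u
  rw [SimpleGraph.adjMatrix_mulVec_apply, hT.neighborFinset_eq_insert hi hiℓ hu hp hup,
    Finset.sum_insert (hT.not_mem_children hi hiℓ hp)] at h
  simpa using h.symm

lemma lucasU_mul_eq_of_adj_parent [Fintype W] (hT : IsCompleteTreeLevels G X ℓ k) {lam : ℝ} {w : W → ℝ}
    (heig : G.adjMatrix ℝ *ᵥ w = lam • w) (hi : 1 ≤ i) (hiℓ : i ≤ ℓ)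
    (hu : u ∈ X i) (hp : p ∈ X (i - 1)) (hup : G.Adj u p) :
    lucasU lam k (ℓ - i + 2) * w u = lucasU lam k (ℓ - i + 1) * w p := by
  obtain ⟨j, hj⟩ : ∃ j, ℓ - i = j := ⟨_, rfl⟩
  induction j generalizing i u p with
  | zero =>
    have hleaf := hT.eigen_eq_parent_add_children heig hi hiℓ hu hp hup
    rw [show i = ℓ by omega, hT.top_eq_empty] at hleaf
    rw [hj, lucasU_add_two, lucasU_zero]
    simp only [Finset.filter_empty, Finset.sum_empty, add_zero] at hleaf
    rw [← hleaf]
    ring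
  | succ j ih =>
    have hchild : ∀ c ∈ (X (i + 1)).filter (G.Adj u),
        lucasU lam k (j + 2) * w c = lucasU lam k (j + 1) * w u := fun c hc => by
      rw [Finset.mem_filter] at hc
      simpa [show ℓ - (i + 1) = j by omega] using
        ih (by omega) (by omega) hc.1 hu hc.2.symm (by omega)
    have hsum : lucasU lam k (j + 2) * ∑ c ∈ (X (i + 1)).filter (G.Adj u), w c =
        k * (lucasU lam k (j + 1) * w u) := by
      rw [Finset.mul_sum, Finset.sum_congr rfl hchild, Finset.sum_const,
        hT.card_children i (by omega) u hu, nsmul_eq_mul]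
    rw [hj, lucasU_add_two]
    linear_combination lucasU lam k (j + 2) * hT.eigen_eq_parent_add_children heig hi hiℓ hu hp hup
      + hsum

lemma eigenvector_eq_of_mem_level [Fintype W] (hT : IsCompleteTreeLevels G X ℓ k) {lam : ℝ}
    {w : W → ℝ} (heig : G.adjMatrix ℝ *ᵥ w = lam • w) (hlam : 0 < lam)
    (hdisc : 0 < lam ^ 2 - 4 * k) {root : W} (hX0 : X 0 = {root}) (hiℓ : i ≤ ℓ) {u₁ u₂ : W}
    (hu₁ : u₁ ∈ X i) (hu₂ : u₂ ∈ X i) : w u₁ = w u₂ := by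
  induction i generalizing u₁ u₂ with
  | zero =>
    rw [hX0, Finset.mem_singleton] at hu₁ hu₂
    rw [hu₁, hu₂]
  | succ i ih =>
    obtain ⟨p₁, ⟨hp₁, hup₁⟩, -⟩ := hT.existsUnique_parent (i + 1) (by omega) hiℓ u₁ hu₁
    obtain ⟨p₂, ⟨hp₂, hup₂⟩, -⟩ := hT.existsUnique_parent (i + 1) (by omega) hiℓ u₂ hu₂
    have h₁ := hT.lucasU_mul_eq_of_adj_parent heig (by omega) hiℓ hu₁ hp₁ hup₁
    have h₂ := hT.lucasU_mul_eq_of_adj_parent heig (by omega) hiℓ hu₂ hp₂ hup₂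
    have hp : w p₁ = w p₂ := ih (by omega) hp₁ hp₂
    refine mul_left_cancel₀ (lucasU_succ_pos hlam hdisc (ℓ - (i + 1) + 1)).ne' ?_
    rw [h₁, h₂, hp]

lemma eigenvector_eq_lucasU_mul [Fintype W] (hT : IsCompleteTreeLevels G X ℓ k) (hk : 1 ≤ k)
    {lam : ℝ} {w : W → ℝ} (heig : G.adjMatrix ℝ *ᵥ w = lam • w) (hlam : 0 < lam)
    (hdisc : 0 < lam ^ 2 - 4 * k) {x : ℝ} (hleaf : ∀ u ∈ X ℓ, w u = x) (hiℓ : i ≤ ℓ)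
    (hu : u ∈ X (ℓ - i)) : w u = lucasU lam k (i + 1) * x := by
  induction i generalizing u with
  | zero => rw [hleaf u hu, lucasU_one hdisc, one_mul]
  | succ i ih =>
    obtain ⟨c, hc⟩ : ((X (ℓ - (i + 1) + 1)).filter (G.Adj u)).Nonempty := by
      rw [← Finset.card_pos, hT.card_children _ (by omega) u hu]
      exact hk
    rw [Finset.mem_filter, show ℓ - (i + 1) + 1 = ℓ - i by omega] at hc
    have hcu := hT.lucasU_mul_eq_of_adj_parent heig (by omega) (by omega) hc.1
      (by rwa [Nat.sub_sub]) hc.2.symm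
    rw [show ℓ - (ℓ - i) = i by omega, ih (by omega) hc.1] at hcu
    refine mul_left_cancel₀ (lucasU_succ_pos hlam hdisc i).ne' ?_
    linear_combination -hcu

end IsCompleteTreeLevels

theorem pendant_tree_eigenvector_radial_general
    {W : Type*} [Fintype W] [DecidableEq W]
    (G : SimpleGraph W) [DecidableRel G.Adj]
    (d ℓ : ℕ) (hd : 3 ≤ d)
    (lam : ℝ) (hlam : 2 * Real.sqrt (d - 1) < lam)
    (a : ℕ → ℝ)
    (ha : ∀ i, a i =
      (((lam + Real.sqrt (lam ^ 2 - 4 * (d - 1))) / 2) ^ (i + 1) -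
        ((lam - Real.sqrt (lam ^ 2 - 4 * (d - 1))) / 2) ^ (i + 1)) /
        Real.sqrt (lam ^ 2 - 4 * (d - 1)))
    (root : W) (X : ℕ → Finset W)
    (hX0 : X 0 = {root})
    (hdisj : ∀ i j, i ≤ ℓ → j ≤ ℓ → i ≠ j → Disjoint (X i) (X j))
    (hchild : ∀ i, i < ℓ → ∀ u ∈ X i, ((X (i + 1)).filter (fun w' => G.Adj u w')).card = d - 1)
    (hparent : ∀ i, 1 ≤ i → i ≤ ℓ → ∀ u ∈ X i, ∃! p, p ∈ X (i - 1) ∧ G.Adj u p)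
    (hnbrs : ∀ i, 1 ≤ i → i ≤ ℓ → ∀ u ∈ X i, ∀ w', G.Adj u w' →
        w' ∈ X (i - 1) ∪ X (i + 1))
    (hXtop : X (ℓ + 1) = ∅)
    (w : W → ℝ)
    (heig : G.adjMatrix ℝ *ᵥ w = lam • w) :
    (∀ i, i ≤ ℓ → ∀ u₁ ∈ X i, ∀ u₂ ∈ X i, w u₁ = w u₂) ∧
    (∀ x : ℝ, (∀ u ∈ X ℓ, w u = x) →
      ∀ i, i ≤ ℓ → ∀ u ∈ X (ℓ - i), w u = a i * x) := by
  have hT : IsCompleteTreeLevels G X ℓ (d - 1) := ⟨hdisj, hchild, hparent, hnbrs, hXtop⟩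
  have hk : ((d - 1 : ℕ) : ℝ) = d - 1 := by rw [Nat.cast_sub (by omega), Nat.cast_one]
  have ha' : ∀ i, a i = lucasU lam (d - 1 : ℕ) (i + 1) := fun i => by rw [ha i, hk]; rfl
  have hsqrt : Real.sqrt ((d : ℝ) - 1) ^ 2 = d - 1 := Real.sq_sqrt (by rw [← hk]; positivity)
  have hlam0 : 0 < lam := lt_of_le_of_lt (by positivity) hlam
  have hdisc : 0 < lam ^ 2 - 4 * ((d - 1 : ℕ) : ℝ) := by
    rw [hk]; nlinarith [Real.sqrt_nonneg ((d : ℝ) - 1), hsqrt]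
  refine ⟨fun i hi u₁ hu₁ u₂ hu₂ => hT.eigenvector_eq_of_mem_level heig hlam0 hdisc hX0 hi hu₁ hu₂,
    fun x hx i hi u hu => ?_⟩
  rw [ha' i]
  exact hT.eigenvector_eq_lucasU_mul (by omega) heig hlam0 hdisc hx hi hu

/-- radial structure of eigenvectors on a pendant complete `(d-1)`-ary tree.
`X i` is the set of vertices of the tree `T` at distance `i` from its root; the root is the
unique neighbor of `v` in `T`, the tree is a connected component of `G \ {v}`, every non-leaf
vertex has `d-1` children and all leaves are at distance `ℓ` from the root.  If `λ > 2√(d-1)`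
is an eigenvalue of `G` with eigenvector `w`, then `w` is radial on `T`, and if the leaves
carry value `x` then vertices at distance `ℓ - i` from the root carry value `a_i(λ)·x`. -/
theorem pendant_tree_eigenvector_radial
    {W : Type*} [Fintype W] [DecidableEq W]
    (G : SimpleGraph W) [DecidableRel G.Adj]
    (d ℓ : ℕ) (hd : 3 ≤ d)
    (lam : ℝ) (hlam : 2 * Real.sqrt (d - 1) < lam)
    (a : ℕ → ℝ)
    (ha : ∀ i, a i =
      (((lam + Real.sqrt (lam ^ 2 - 4 * (d - 1))) / 2) ^ (i + 1) -
        ((lam - Real.sqrt (lam ^ 2 - 4 * (d - 1))) / 2) ^ (i + 1)) /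
        Real.sqrt (lam ^ 2 - 4 * (d - 1)))
    (v root : W) (X : ℕ → Finset W)
    (hX0 : X 0 = {root})
    (hdisj : ∀ i j, i ≤ ℓ → j ≤ ℓ → i ≠ j → Disjoint (X i) (X j))
    (hvnotT : ∀ i, i ≤ ℓ → v ∉ X i)
    (hvroot : G.Adj v root)
    (hvonly : ∀ i, i ≤ ℓ → ∀ u ∈ X i, u ≠ root → ¬ G.Adj v u)
    (hchild : ∀ i, i < ℓ → ∀ u ∈ X i, ((X (i + 1)).filter (fun w' => G.Adj u w')).card = d - 1)
    (hparent : ∀ i, 1 ≤ i → i ≤ ℓ → ∀ u ∈ X i, ∃! p, p ∈ X (i - 1) ∧ G.Adj u p)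
    (hroot_nbrs : ∀ u' , G.Adj root u' → u' = v ∨ u' ∈ X 1)
    (hnbrs : ∀ i, 1 ≤ i → i ≤ ℓ → ∀ u ∈ X i, ∀ w', G.Adj u w' →
        w' ∈ X (i - 1) ∪ X (i + 1))
    (hXtop : X (ℓ + 1) = ∅)
    (w : W → ℝ) (hw : w ≠ 0)
    (heig : G.adjMatrix ℝ *ᵥ w = lam • w) :
    (∀ i, i ≤ ℓ → ∀ u₁ ∈ X i, ∀ u₂ ∈ X i, w u₁ = w u₂) ∧
    (∀ x : ℝ, (∀ u ∈ X ℓ, w u = x) →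
      ∀ i, i ≤ ℓ → ∀ u ∈ X (ℓ - i), w u = a i * x) :=
  pendant_tree_eigenvector_radial_general G d ℓ hd lam hlam a ha root X hX0 hdisj hchild hparent
    hnbrs hXtop w heig
end

section
/- Fix integers d ≥ 3, s ≥ 1, ℓ ≥ 2 and a connected graph G'. Let G be the graph obtained from G' by attaching to every vertex of G' exactly s disjoint (d−1)-ary trees with ℓ levels, joining each such tree's root by an edge to that vertex. Then for every real λ > 2√(d−1): λ is an eigenvalue of G if and only if λ − s·a_{ℓ−1}(λ)/a_ℓ(λ) is an eigenvalue of G', where a_i(λ) is the Chebyshev-like sequence a_0 = 1, a_1 = λ, a_{i+1} = λ a_i − (d−1) a_{i−1}. -/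
/-!
Measure the height of a tree vertex as its distance to the leaves. The recurrence
`a_{k+1} = λ a_k - (d - 1) a_{k-1}` is exactly the eigenvalue equation at a tree vertex of height `k`,
so the function equal to `a_k(λ) y(v)` at height `k` in the trees hanging at `v` satisfies the
equation on all tree vertices, whatever `y : V(G') → ℝ` is. Conversely, solving the eigenvalue
equation from the leaves upwards shows that every eigenvector for `λ` has this form, with
`a_ℓ(λ) y` its restriction to `G'`. At a vertex of `G'` the `s` roots contribute
`s a_{ℓ-1}(λ) y(v)`, which turns the equation for `λ` on `G` into the equation for
`λ - s a_{ℓ-1}(λ) / a_ℓ(λ)` on `G'`. For `λ > 2√(d-1)` all `a_k(λ)` are positive, so nothing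
is divided by zero.
-/

open scoped RealInnerProductSpace
open Matrix

open Finset

theorem SimpleGraph.adjMatrix_mulVec_eq_smul_iff {V α : Type*} [Fintype V] [NonAssocSemiring α]
    (G : SimpleGraph V) [DecidableRel G.Adj] (x : V → α) (c : α) :
    G.adjMatrix α *ᵥ x = c • x ↔ ∀ v, ∑ u ∈ G.neighborFinset v, x u = c * x v := by
  simp only [funext_iff, SimpleGraph.adjMatrix_mulVec_apply, Pi.smul_apply, smul_eq_mul]

/-- For `m > 0`, `scaledChebyshevU m x i = √m ^ i * U_i (x / (2 * √m))`; with `m = d - 1` it is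
the paper's `a_i(x)`. -/
noncomputable def scaledChebyshevU (m x : ℝ) : ℕ → ℝ
  | 0 => 1
  | 1 => x
  | i + 2 => x * scaledChebyshevU m x (i + 1) - m * scaledChebyshevU m x i

section scaledChebyshevU

variable {m x : ℝ}

theorem eq_scaledChebyshevU {a : ℕ → ℝ} (h0 : a 0 = 1) (h1 : a 1 = x)
    (hrec : ∀ i, a (i + 2) = x * a (i + 1) - m * a i) : a = scaledChebyshevU m x := by
  have key : ∀ i, a i = scaledChebyshevU m x i ∧ a (i + 1) = scaledChebyshevU m x (i + 1) := by
    intro i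
    induction i with
    | zero => exact ⟨h0, h1⟩
    | succ i ih => exact ⟨ih.2, by rw [hrec, ih.1, ih.2, scaledChebyshevU]⟩
  exact funext fun i => (key i).1

theorem scaledChebyshevU_pos_and_sqrt_mul_lt (hm : 0 ≤ m) (hx : 2 * √m < x) (i : ℕ) :
    0 < scaledChebyshevU m x i ∧ √m * scaledChebyshevU m x i < scaledChebyshevU m x (i + 1) := by
  have hsq : √m * √m = m := Real.mul_self_sqrt hm
  have hsqrt := Real.sqrt_nonneg m
  induction i with
  | zero => simp only [scaledChebyshevU]; constructor <;> linarith
  | succ i ih =>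
    obtain ⟨hpos, hlt⟩ := ih
    have hpos' : 0 < scaledChebyshevU m x (i + 1) := by nlinarith
    refine ⟨hpos', ?_⟩
    -- `m a_i = √m (√m a_i) ≤ √m a_{i+1}`, so `a_{i+2} - √m a_{i+1} ≥ (x - 2√m) a_{i+1} > 0`.
    rw [scaledChebyshevU]
    nlinarith [mul_le_mul_of_nonneg_left hlt.le hsqrt, mul_lt_mul_of_pos_right hx hpos']

theorem scaledChebyshevU_pos (hm : 0 ≤ m) (hx : 2 * √m < x) (i : ℕ) :
    0 < scaledChebyshevU m x i :=
  (scaledChebyshevU_pos_and_sqrt_mul_lt hm hx i).1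

end scaledChebyshevU

/-- `G` arises from `G'`, embedded by `ι`, by hanging `s` trees with `ℓ` levels and branching `m`
at every vertex; `X i` is the set of vertices at distance `i` from `ι '' V`. -/
structure IsTreeAugmentation {V W : Type*} [DecidableEq W] (G' : SimpleGraph V)
    (G : SimpleGraph W) [DecidableRel G.Adj] (ι : V ↪ W) (X : ℕ → Finset W) (s m ℓ : ℕ) :
    Prop where
  mem_zero_iff : ∀ w, w ∈ X 0 ↔ ∃ v, ι v = w
  exists_level : ∀ w, ∃ i ≤ ℓ, w ∈ X i
  disjoint_levels : ∀ i j, i ≤ ℓ → j ≤ ℓ → i ≠ j → Disjoint (X i) (X j)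
  adj_embedding_iff : ∀ u v, G.Adj (ι u) (ι v) ↔ G'.Adj u v
  adj_embedding_cases : ∀ v w, G.Adj (ι v) w → (∃ u, ι u = w) ∨ w ∈ X 1
  card_roots : ∀ v, #((X 1).filter (fun w => G.Adj (ι v) w)) = s
  card_successors : ∀ i, 1 ≤ i → i < ℓ → ∀ u ∈ X i, #((X (i + 1)).filter (fun w => G.Adj u w)) = m
  existsUnique_predecessor : ∀ i, 1 ≤ i → i ≤ ℓ → ∀ u ∈ X i, ∃! p, p ∈ X (i - 1) ∧ G.Adj u p
  adj_mem_levels : ∀ i, 1 ≤ i → i ≤ ℓ → ∀ u ∈ X i, ∀ w, G.Adj u w → w ∈ X (i - 1) ∪ X (i + 1)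
  level_succ_eq_empty : X (ℓ + 1) = ∅

namespace IsTreeAugmentation

variable {V W : Type*} [DecidableEq W] {G' : SimpleGraph V} {G : SimpleGraph W}
  [DecidableRel G.Adj] {ι : V ↪ W} {X : ℕ → Finset W} {s m ℓ : ℕ}
  (T : IsTreeAugmentation G' G ι X s m ℓ)

noncomputable def level (w : W) : ℕ := (T.exists_level w).choose

theorem level_le (w : W) : T.level w ≤ ℓ := (T.exists_level w).choose_spec.1

theorem mem_level (w : W) : w ∈ X (T.level w) := (T.exists_level w).choose_spec.2

theorem level_eq_of_mem {w : W} {i : ℕ} (hi : i ≤ ℓ) (hw : w ∈ X i) : T.level w = i := by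
  by_contra h
  exact disjoint_left.mp (T.disjoint_levels _ _ (T.level_le w) hi h) (T.mem_level w) hw

theorem level_embedding (v : V) : T.level (ι v) = 0 :=
  T.level_eq_of_mem (Nat.zero_le ℓ) ((T.mem_zero_iff _).2 ⟨v, rfl⟩)

noncomputable def height (w : W) : ℕ := ℓ - T.level w

theorem height_embedding (v : V) : T.height (ι v) = ℓ := by
  rw [height, T.level_embedding]; rfl

theorem existsUnique_parent {w : W} (hw : 1 ≤ T.level w) :
    ∃! p, p ∈ X (T.level w - 1) ∧ G.Adj w p :=
  T.existsUnique_predecessor _ hw (T.level_le w) w (T.mem_level w)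

noncomputable def parent (w : W) : W :=
  if hw : 1 ≤ T.level w then (T.existsUnique_parent hw).exists.choose else w

theorem parent_mem_and_adj {w : W} (hw : 1 ≤ T.level w) :
    T.parent w ∈ X (T.level w - 1) ∧ G.Adj w (T.parent w) := by
  rw [parent, dif_pos hw]
  exact (T.existsUnique_parent hw).exists.choose_spec

theorem eq_parent_of_adj {w p : W} (hw : 1 ≤ T.level w) (hp : p ∈ X (T.level w - 1))
    (hadj : G.Adj w p) : p = T.parent w :=
  (T.existsUnique_parent hw).unique ⟨hp, hadj⟩ (T.parent_mem_and_adj hw)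

theorem level_parent {w : W} (hw : 1 ≤ T.level w) : T.level (T.parent w) = T.level w - 1 :=
  T.level_eq_of_mem (by have := T.level_le w; omega) (T.parent_mem_and_adj hw).1

theorem height_parent {w : W} (hw : 1 ≤ T.level w) : T.height (T.parent w) = T.height w + 1 := by
  have := T.level_le w
  rw [height, height, T.level_parent hw]
  omega

theorem iterate_parent_level_mem (w : W) : T.parent^[T.level w] w ∈ X 0 := by
  induction hn : T.level w generalizing w with
  | zero => rw [Function.iterate_zero_apply, ← hn]; exact T.mem_level w
  | succ n ih =>
    rw [Function.iterate_succ_apply]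
    exact ih _ (by rw [T.level_parent (by omega), hn]; rfl)

noncomputable def base (w : W) : V :=
  ((T.mem_zero_iff _).1 (T.iterate_parent_level_mem w)).choose

theorem embedding_base (w : W) : ι (T.base w) = T.parent^[T.level w] w :=
  ((T.mem_zero_iff _).1 (T.iterate_parent_level_mem w)).choose_spec

theorem embedding_base_of_level_eq_zero {w : W} (hw : T.level w = 0) : ι (T.base w) = w := by
  rw [T.embedding_base, hw, Function.iterate_zero_apply]

theorem base_embedding (v : V) : T.base (ι v) = v :=
  ι.injective (T.embedding_base_of_level_eq_zero (T.level_embedding v))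

theorem base_parent {w : W} (hw : 1 ≤ T.level w) : T.base (T.parent w) = T.base w := by
  apply ι.injective
  rw [T.embedding_base, T.embedding_base, T.level_parent hw,
    ← Function.iterate_succ_apply, Nat.succ_eq_add_one, Nat.sub_add_cancel hw]

noncomputable def children (w : W) : Finset W := (X (T.level w + 1)).filter (fun u => G.Adj w u)

theorem level_lt_of_mem_children {w c : W} (hc : c ∈ T.children w) : T.level w < ℓ := by
  by_contra h
  have hw : T.level w = ℓ := le_antisymm (T.level_le w) (not_lt.mp h)
  simp [children, hw, T.level_succ_eq_empty] at hc

theorem level_of_mem_children {w c : W} (hc : c ∈ T.children w) :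
    T.level c = T.level w + 1 :=
  T.level_eq_of_mem (T.level_lt_of_mem_children hc) (mem_filter.mp hc).1

theorem height_of_mem_children {w c : W} (hc : c ∈ T.children w) :
    T.height c = T.height w - 1 := by
  rw [height, height, T.level_of_mem_children hc]
  omega

theorem height_lt_of_mem_children {w c : W} (hc : c ∈ T.children w) :
    T.height c < T.height w := by
  have := T.level_lt_of_mem_children hc
  rw [T.height_of_mem_children hc, height]
  omega

theorem parent_of_mem_children {w c : W} (hc : c ∈ T.children w) : T.parent c = w := by
  have hlevel := T.level_of_mem_children hc
  refine (T.eq_parent_of_adj (by omega) ?_ (mem_filter.mp hc).2.symm).symm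
  rw [hlevel, Nat.add_sub_cancel]
  exact T.mem_level w

theorem base_of_mem_children {w c : W} (hc : c ∈ T.children w) : T.base c = T.base w := by
  rw [← T.base_parent (by rw [T.level_of_mem_children hc]; omega), T.parent_of_mem_children hc]

theorem parent_notMem_children {w : W} (hw : 1 ≤ T.level w) : T.parent w ∉ T.children w := by
  intro h
  have := T.level_of_mem_children h
  rw [T.level_parent hw] at this
  omega

theorem children_eq_empty {w : W} (hw : T.level w = ℓ) : T.children w = ∅ := by
  simp [children, hw, T.level_succ_eq_empty]

theorem card_children {w : W} (hw : 1 ≤ T.level w) (hlt : T.level w < ℓ) :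
    #(T.children w) = m :=
  T.card_successors _ hw hlt w (T.mem_level w)

theorem card_children_embedding (v : V) : #(T.children (ι v)) = s := by
  simpa [children, T.level_embedding] using T.card_roots v

theorem neighborFinset_eq_insert_parent [Fintype W] {w : W} (hw : 1 ≤ T.level w) :
    G.neighborFinset w = insert (T.parent w) (T.children w) := by
  ext u
  simp only [SimpleGraph.mem_neighborFinset, mem_insert, children, mem_filter]
  constructor
  · intro hadj
    rcases mem_union.mp (T.adj_mem_levels _ hw (T.level_le w) w (T.mem_level w) u hadj) with
      hu | hu
    · exact Or.inl (T.eq_parent_of_adj hw hu hadj)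
    · exact Or.inr ⟨hu, hadj⟩
  · rintro (rfl | ⟨-, hadj⟩)
    · exact (T.parent_mem_and_adj hw).2
    · exact hadj

section Embedding

variable [Fintype V] [DecidableRel G'.Adj]

theorem disjoint_map_children (v : V) :
    Disjoint ((G'.neighborFinset v).map ι) (T.children (ι v)) := by
  refine disjoint_left.mpr fun w hw hc => ?_
  obtain ⟨u, -, rfl⟩ := mem_map.mp hw
  have := T.level_of_mem_children hc
  rw [T.level_embedding, T.level_embedding] at this
  omega

theorem neighborFinset_embedding [Fintype W] (v : V) :
    G.neighborFinset (ι v) = (G'.neighborFinset v).map ι ∪ T.children (ι v) := by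
  ext w
  simp only [SimpleGraph.mem_neighborFinset, mem_union, mem_map, children, mem_filter,
    T.level_embedding, zero_add]
  constructor
  · intro hadj
    rcases T.adj_embedding_cases v w hadj with ⟨u, rfl⟩ | hw
    · exact Or.inl ⟨u, (T.adj_embedding_iff v u).1 hadj, rfl⟩
    · exact Or.inr ⟨hw, hadj⟩
  · rintro (⟨u, hu, rfl⟩ | ⟨-, hadj⟩)
    · exact (T.adj_embedding_iff v u).2 hu
    · exact hadj

end Embedding

section Lift

variable (lam : ℝ)

noncomputable def lift (y : V → ℝ) (w : W) : ℝ :=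
  scaledChebyshevU m lam (T.height w) * y (T.base w)

theorem lift_embedding (y : V → ℝ) (v : V) :
    T.lift lam y (ι v) = scaledChebyshevU m lam ℓ * y v := by
  rw [lift, T.height_embedding, T.base_embedding]

theorem lift_zero : T.lift lam 0 = 0 := by
  ext w
  simp [lift]

theorem lift_ne_zero {y : V → ℝ} (hU : scaledChebyshevU m lam ℓ ≠ 0) (hy : y ≠ 0) :
    T.lift lam y ≠ 0 := by
  obtain ⟨v, hv⟩ := Function.ne_iff.mp hy
  exact Function.ne_iff.mpr ⟨ι v, by simpa [T.lift_embedding] using mul_ne_zero hU hv⟩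

theorem scaledChebyshevU_height_succ {w : W} (hw : 1 ≤ T.level w) :
    scaledChebyshevU m lam (T.height w + 1) = lam * scaledChebyshevU m lam (T.height w) -
      #(T.children w) * scaledChebyshevU m lam (T.height w - 1) := by
  rcases (T.level_le w).eq_or_lt with hl | hl
  · rw [T.children_eq_empty hl, height, hl, Nat.sub_self]
    simp [scaledChebyshevU]
  · obtain ⟨k, hk⟩ : ∃ k, T.height w = k + 1 := ⟨T.height w - 1, by rw [height]; omega⟩
    rw [T.card_children hw hl, hk, Nat.add_sub_cancel, scaledChebyshevU]

theorem sum_neighborFinset_lift [Fintype W] (y : V → ℝ) {w : W} (hw : 1 ≤ T.level w) :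
    ∑ u ∈ G.neighborFinset w, T.lift lam y u = lam * T.lift lam y w := by
  have hchild : ∀ c ∈ T.children w,
      T.lift lam y c = scaledChebyshevU m lam (T.height w - 1) * y (T.base w) := fun c hc => by
    rw [lift, T.height_of_mem_children hc, T.base_of_mem_children hc]
  rw [T.neighborFinset_eq_insert_parent hw, sum_insert (T.parent_notMem_children hw),
    sum_congr rfl hchild, sum_const, nsmul_eq_mul, lift, lift, T.height_parent hw,
    T.base_parent hw, T.scaledChebyshevU_height_succ lam hw]
  ring

theorem sum_neighborFinset_lift_embedding [Fintype V] [Fintype W] [DecidableRel G'.Adj]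
    (y : V → ℝ) (v : V) :
    ∑ u ∈ G.neighborFinset (ι v), T.lift lam y u =
      scaledChebyshevU m lam ℓ * ∑ u ∈ G'.neighborFinset v, y u +
        s * scaledChebyshevU m lam (ℓ - 1) * y v := by
  have hchild : ∀ c ∈ T.children (ι v),
      T.lift lam y c = scaledChebyshevU m lam (ℓ - 1) * y v := fun c hc => by
    rw [lift, T.height_of_mem_children hc, T.base_of_mem_children hc, T.height_embedding,
      T.base_embedding]
  rw [T.neighborFinset_embedding, sum_union (T.disjoint_map_children v), sum_map,
    sum_congr rfl hchild, sum_const, T.card_children_embedding, nsmul_eq_mul, mul_sum]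
  simp only [T.lift_embedding]
  ring

theorem adjMatrix_mulVec_lift_eq_smul_iff [Fintype V] [Fintype W] [DecidableRel G'.Adj]
    {y : V → ℝ} (hU : scaledChebyshevU m lam ℓ ≠ 0) :
    G.adjMatrix ℝ *ᵥ T.lift lam y = lam • T.lift lam y ↔
      G'.adjMatrix ℝ *ᵥ y =
        (lam - s * scaledChebyshevU m lam (ℓ - 1) / scaledChebyshevU m lam ℓ) • y := by
  simp only [SimpleGraph.adjMatrix_mulVec_eq_smul_iff]
  have hbase : ∀ v, ∑ u ∈ G.neighborFinset (ι v), T.lift lam y u = lam * T.lift lam y (ι v) ↔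
      ∑ u ∈ G'.neighborFinset v, y u =
        (lam - s * scaledChebyshevU m lam (ℓ - 1) / scaledChebyshevU m lam ℓ) * y v := by
    intro v
    rw [T.sum_neighborFinset_lift_embedding, T.lift_embedding]
    constructor <;> intro h
    · field_simp
      linear_combination h
    · field_simp at h
      linear_combination h
  constructor
  · exact fun h v => (hbase v).1 (h (ι v))
  · intro h w
    rcases Nat.eq_zero_or_pos (T.level w) with hw | hw
    · rw [← T.embedding_base_of_level_eq_zero hw]
      exact (hbase _).2 (h _)
    · exact T.sum_neighborFinset_lift lam y hw

variable [Fintype W] {x : W → ℝ}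

theorem scaledChebyshevU_height_mul_parent (hx : G.adjMatrix ℝ *ᵥ x = lam • x) (w : W)
    (hw : 1 ≤ T.level w) :
    scaledChebyshevU m lam (T.height w) * x (T.parent w) =
      scaledChebyshevU m lam (T.height w + 1) * x w := by
  have hchild : ∀ c ∈ T.children w, scaledChebyshevU m lam (T.height w) * x c =
      scaledChebyshevU m lam (T.height w - 1) * x w := by
    intro c hc
    have hrec := scaledChebyshevU_height_mul_parent hx c
      (by rw [T.level_of_mem_children hc]; omega)
    have hpos : 1 ≤ T.height w := by have := T.height_lt_of_mem_children hc; omega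
    rwa [T.parent_of_mem_children hc, T.height_of_mem_children hc, Nat.sub_add_cancel hpos,
      eq_comm] at hrec
  have hsum := (SimpleGraph.adjMatrix_mulVec_eq_smul_iff G x lam).1 hx w
  rw [T.neighborFinset_eq_insert_parent hw, sum_insert (T.parent_notMem_children hw)] at hsum
  have hchildren : scaledChebyshevU m lam (T.height w) * ∑ c ∈ T.children w, x c =
      #(T.children w) * scaledChebyshevU m lam (T.height w - 1) * x w := by
    rw [mul_sum, sum_congr rfl hchild, sum_const, nsmul_eq_mul, mul_assoc]
  rw [T.scaledChebyshevU_height_succ lam hw]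
  linear_combination scaledChebyshevU m lam (T.height w) * hsum - hchildren
termination_by T.height w
decreasing_by exact T.height_lt_of_mem_children hc

theorem mul_eq_lift_comp_embedding (hU : ∀ i, scaledChebyshevU m lam i ≠ 0)
    (hx : G.adjMatrix ℝ *ᵥ x = lam • x) (w : W) :
    scaledChebyshevU m lam ℓ * x w = T.lift lam (x ∘ ι) w := by
  rcases Nat.eq_zero_or_pos (T.level w) with hw | hw
  · rw [lift, Function.comp_apply, T.embedding_base_of_level_eq_zero hw, height, hw,
      Nat.sub_zero]
  · have hrec := mul_eq_lift_comp_embedding hU hx (T.parent w)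
    rw [lift, T.height_parent hw, T.base_parent hw, Function.comp_apply] at hrec
    have hpar := T.scaledChebyshevU_height_mul_parent lam hx w hw
    apply mul_left_cancel₀ (hU (T.height w + 1))
    rw [lift, Function.comp_apply]
    linear_combination scaledChebyshevU m lam (T.height w) * hrec -
      scaledChebyshevU m lam ℓ * hpar
termination_by T.level w
decreasing_by rw [T.level_parent hw]; omega

theorem lift_comp_embedding (hU : ∀ i, scaledChebyshevU m lam i ≠ 0)
    (hx : G.adjMatrix ℝ *ᵥ x = lam • x) :
    T.lift lam (x ∘ ι) = scaledChebyshevU m lam ℓ • x :=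
  funext fun w => (T.mul_eq_lift_comp_embedding lam hU hx w).symm

end Lift

end IsTreeAugmentation

theorem tree_augmentation_eigenvalue_correspondence_general
    {V W : Type*} [Fintype V] [Fintype W] [DecidableEq W]
    (d s ℓ : ℕ) (hd : 3 ≤ d)
    (G' : SimpleGraph V) [DecidableRel G'.Adj]
    (Gbig : SimpleGraph W) [DecidableRel Gbig.Adj]
    (ι : V ↪ W) (X : ℕ → Finset W)
    (hX0 : ∀ w : W, w ∈ X 0 ↔ ∃ a : V, ι a = w)
    (hcover : ∀ w : W, ∃ i ≤ ℓ, w ∈ X i)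
    (hdisj : ∀ i j, i ≤ ℓ → j ≤ ℓ → i ≠ j → Disjoint (X i) (X j))
    (hbase : ∀ a b : V, Gbig.Adj (ι a) (ι b) ↔ G'.Adj a b)
    (hbase_nbrs : ∀ (a : V) (w : W), Gbig.Adj (ι a) w → (∃ b : V, ι b = w) ∨ w ∈ X 1)
    (hroots : ∀ a : V, ((X 1).filter (fun w => Gbig.Adj (ι a) w)).card = s)
    (hchild : ∀ i, 1 ≤ i → i < ℓ → ∀ u ∈ X i,
        ((X (i + 1)).filter (fun w => Gbig.Adj u w)).card = d - 1)
    (hparent : ∀ i, 1 ≤ i → i ≤ ℓ → ∀ u ∈ X i, ∃! p, p ∈ X (i - 1) ∧ Gbig.Adj u p)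
    (hnbrs : ∀ i, 1 ≤ i → i ≤ ℓ → ∀ u ∈ X i, ∀ w, Gbig.Adj u w → w ∈ X (i - 1) ∪ X (i + 1))
    (hXtop : X (ℓ + 1) = ∅)
    (a : ℕ → ℝ → ℝ)
    (ha0 : ∀ lam, a 0 lam = 1) (ha1 : ∀ lam, a 1 lam = lam)
    (harec : ∀ i lam, a (i + 2) lam = lam * a (i + 1) lam - (d - 1) * a i lam) :
    ∀ lam : ℝ, 2 * Real.sqrt (d - 1) < lam →
      ((∃ x : W → ℝ, x ≠ 0 ∧ Gbig.adjMatrix ℝ *ᵥ x = lam • x) ↔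
        (∃ y : V → ℝ, y ≠ 0 ∧
          G'.adjMatrix ℝ *ᵥ y = (lam - s * a (ℓ - 1) lam / a ℓ lam) • y)) := by
  
  intro lam hlam
  have T : IsTreeAugmentation G' Gbig ι X s (d - 1) ℓ :=
    ⟨hX0, hcover, hdisj, hbase, hbase_nbrs, hroots, hchild, hparent, hnbrs, hXtop⟩
  have hm : ((d - 1 : ℕ) : ℝ) = d - 1 := by rw [Nat.cast_sub (by omega), Nat.cast_one]
  have ha : ∀ i, a i lam = scaledChebyshevU (d - 1 : ℕ) lam i :=
    congrFun <| eq_scaledChebyshevU (ha0 lam) (ha1 lam) fun i => by rw [harec, hm]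
  have hU : ∀ i, scaledChebyshevU (d - 1 : ℕ) lam i ≠ 0 := fun i =>
    (scaledChebyshevU_pos (Nat.cast_nonneg _) (by rwa [hm]) i).ne'
  rw [ha, ha]
  constructor
  · rintro ⟨x, hx0, hx⟩
    have hlift := T.lift_comp_embedding lam hU hx
    refine ⟨x ∘ ι, fun hy => hx0 ?_, (T.adjMatrix_mulVec_lift_eq_smul_iff lam (hU ℓ)).1 ?_⟩
    · rw [hy, T.lift_zero, eq_comm, smul_eq_zero] at hlift
      exact hlift.resolve_left (hU ℓ)
    · rw [hlift, mulVec_smul, hx, smul_comm]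
  · rintro ⟨y, hy0, hy⟩
    exact ⟨T.lift lam y, T.lift_ne_zero lam (hU ℓ) hy0,
      (T.adjMatrix_mulVec_lift_eq_smul_iff lam (hU ℓ)).2 hy⟩

/-- eigenvalue correspondence for the tree augmentation `G = T_s^ℓ(d) G'`,
obtained from `G'` by attaching `s` disjoint `(d-1)`-ary trees with `ℓ` levels to each vertex.
For `λ > 2√(d-1)`: `λ` is an eigenvalue of `G` iff `λ - s·a_{ℓ-1}(λ)/a_ℓ(λ)` is an
eigenvalue of `G'`. -/
theorem tree_augmentation_eigenvalue_correspondence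
    {V W : Type*} [Fintype V] [DecidableEq V] [Fintype W] [DecidableEq W]
    (d s ℓ : ℕ) (hd : 3 ≤ d) (hs : 1 ≤ s) (hℓ : 2 ≤ ℓ)
    (G' : SimpleGraph V) [DecidableRel G'.Adj] (hG'c : G'.Connected)
    (Gbig : SimpleGraph W) [DecidableRel Gbig.Adj]
    (ι : V ↪ W) (X : ℕ → Finset W)
    (hX0 : ∀ w : W, w ∈ X 0 ↔ ∃ a : V, ι a = w)
    (hcover : ∀ w : W, ∃ i ≤ ℓ, w ∈ X i)
    (hdisj : ∀ i j, i ≤ ℓ → j ≤ ℓ → i ≠ j → Disjoint (X i) (X j))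
    (hbase : ∀ a b : V, Gbig.Adj (ι a) (ι b) ↔ G'.Adj a b)
    (hbase_nbrs : ∀ (a : V) (w : W), Gbig.Adj (ι a) w → (∃ b : V, ι b = w) ∨ w ∈ X 1)
    (hroots : ∀ a : V, ((X 1).filter (fun w => Gbig.Adj (ι a) w)).card = s)
    (hchild : ∀ i, 1 ≤ i → i < ℓ → ∀ u ∈ X i,
        ((X (i + 1)).filter (fun w => Gbig.Adj u w)).card = d - 1)
    (hparent : ∀ i, 1 ≤ i → i ≤ ℓ → ∀ u ∈ X i, ∃! p, p ∈ X (i - 1) ∧ Gbig.Adj u p)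
    (hnbrs : ∀ i, 1 ≤ i → i ≤ ℓ → ∀ u ∈ X i, ∀ w, Gbig.Adj u w → w ∈ X (i - 1) ∪ X (i + 1))
    (hXtop : X (ℓ + 1) = ∅)
    (a : ℕ → ℝ → ℝ)
    (ha0 : ∀ lam, a 0 lam = 1) (ha1 : ∀ lam, a 1 lam = lam)
    (harec : ∀ i lam, a (i + 2) lam = lam * a (i + 1) lam - (d - 1) * a i lam) :
    ∀ lam : ℝ, 2 * Real.sqrt (d - 1) < lam →
      ((∃ x : W → ℝ, x ≠ 0 ∧ Gbig.adjMatrix ℝ *ᵥ x = lam • x) ↔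
        (∃ y : V → ℝ, y ≠ 0 ∧
          G'.adjMatrix ℝ *ᵥ y = (lam - s * a (ℓ - 1) lam / a ℓ lam) • y)) :=
  tree_augmentation_eigenvalue_correspondence_general d s ℓ hd G' Gbig ι X hX0 hcover hdisj hbase
    hbase_nbrs hroots hchild hparent hnbrs hXtop a ha0 ha1 harec
end

section
/- Fix integers d ≥ 3, ℓ ≥ 2, s ≥ 0 and a connected graph G' with largest eigenvalue μ₁. The equation λ − s·a_{ℓ−1}(λ)/a_ℓ(λ) = μ₁ has at most one solution λ > 2√(d−1). -/
/-!
The left-hand side `λ - s·a_{ℓ-1}(λ)/a_ℓ(λ)` is strictly increasing on `(2√(d-1), ∞)`, so it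
takes the value `μ₁` at most once. Writing `q = d - 1`, the recurrence
`a_{i+1} = λ a_i - q a_{i-1}` keeps `a_{i+1} > √q · a_i > 0` for `λ > 2√q`, and the cross
difference `a_i(u) a_{i+1}(v) - a_{i+1}(u) a_i(v)` satisfies a recurrence with nonnegative
coefficients for `u ≤ v`; hence every ratio `a_i/a_{i+1}` is antitone there.
-/

open scoped RealInnerProductSpace
open Matrix

open Set

namespace ThreeTermRecurrence

variable {q : ℝ} {a : ℕ → ℝ → ℝ}
  (ha0 : ∀ t, a 0 t = 1) (ha1 : ∀ t, a 1 t = t)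
  (harec : ∀ i t, a (i + 2) t = t * a (i + 1) t - q * a i t)

include ha0 ha1 harec

theorem pos_and_sqrt_mul_lt_succ (hq : 0 ≤ q) {t : ℝ} (ht : 2 * √q < t) (i : ℕ) :
    0 < a i t ∧ √q * a i t < a (i + 1) t := by
  have hsq : √q * √q = q := Real.mul_self_sqrt hq
  have hc : 0 ≤ √q := Real.sqrt_nonneg q
  induction i with
  | zero => simp only [ha0, ha1]; constructor <;> linarith
  | succ i ih =>
    obtain ⟨hpos, hgrow⟩ := ih
    have hpos' : 0 < a (i + 1) t := by nlinarith
    refine ⟨hpos', ?_⟩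
    rw [harec]
    -- `t a_{i+1} - q a_i > 2√q a_{i+1} - √q (√q a_i) ≥ √q a_{i+1}`
    nlinarith [mul_le_mul_of_nonneg_left hgrow.le hc, mul_lt_mul_of_pos_right ht hpos']

theorem pos (hq : 0 ≤ q) {t : ℝ} (ht : 2 * √q < t) (i : ℕ) : 0 < a i t :=
  (pos_and_sqrt_mul_lt_succ ha0 ha1 harec hq ht i).1

theorem succ_mul_le_mul_succ (hq : 0 ≤ q) {u v : ℝ} (hu : 2 * √q < u) (hv : 2 * √q < v)
    (huv : u ≤ v) (i : ℕ) : a (i + 1) u * a i v ≤ a i u * a (i + 1) v := by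
  induction i with
  | zero => simpa only [ha0, ha1, mul_one, one_mul] using huv
  | succ i ih =>
    rw [harec i u, harec i v]
    have hu' := pos ha0 ha1 harec hq hu (i + 1)
    have hv' := pos ha0 ha1 harec hq hv (i + 1)
    nlinarith [mul_nonneg hq (sub_nonneg.2 ih),
      mul_nonneg (sub_nonneg.2 huv) (mul_pos hu' hv').le]

theorem antitoneOn_div_succ (hq : 0 ≤ q) (i : ℕ) :
    AntitoneOn (fun t => a i t / a (i + 1) t) (Ioi (2 * √q)) := by
  intro u hu v hv huv
  rw [div_le_div_iff₀ (pos ha0 ha1 harec hq hv _) (pos ha0 ha1 harec hq hu _)]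
  linarith [succ_mul_le_mul_succ ha0 ha1 harec hq hu hv huv i]

theorem antitoneOn_div_pred (hq : 0 ≤ q) (ℓ : ℕ) :
    AntitoneOn (fun t => a (ℓ - 1) t / a ℓ t) (Ioi (2 * √q)) := by
  cases ℓ with
  | zero => simpa only [ha0, div_one] using antitoneOn_const
  | succ m => exact antitoneOn_div_succ ha0 ha1 harec hq m

theorem strictMonoOn_sub_mul_div_pred (hq : 0 ≤ q) {s : ℝ} (hs : 0 ≤ s) (ℓ : ℕ) :
    StrictMonoOn (fun t => t - s * a (ℓ - 1) t / a ℓ t) (Ioi (2 * √q)) := by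
  intro u hu v hv huv
  have hratio :=
    mul_le_mul_of_nonneg_left (antitoneOn_div_pred ha0 ha1 harec hq ℓ hu hv huv.le) hs
  simp only [mul_div_assoc] at hratio ⊢
  linarith

end ThreeTermRecurrence

theorem augmentation_equation_unique_solution_general
    {V : Type*} [Fintype V] [DecidableEq V]
    (d s ℓ : ℕ) (hd : 3 ≤ d)
    (G' : SimpleGraph V)
    (a : ℕ → ℝ → ℝ)
    (ha0 : ∀ lam, a 0 lam = 1) (ha1 : ∀ lam, a 1 lam = lam)
    (harec : ∀ i lam, a (i + 2) lam = lam * a (i + 1) lam - (d - 1) * a i lam) :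
    ∀ x y : ℝ, 2 * Real.sqrt (d - 1) < x → 2 * Real.sqrt (d - 1) < y →
      x - s * a (ℓ - 1) x / a ℓ x = adjEig G' 0 →
      y - s * a (ℓ - 1) y / a ℓ y = adjEig G' 0 →
      x = y := by
  intro x y hx hy hfx hfy
  have hq : (0 : ℝ) ≤ d - 1 := by
    have : (3 : ℝ) ≤ d := by exact_mod_cast hd
    linarith
  exact (ThreeTermRecurrence.strictMonoOn_sub_mul_div_pred ha0 ha1 harec hq s.cast_nonneg ℓ).injOn
    hx hy (hfx.trans hfy.symm)

/-- for a connected graph `G'` with largest eigenvalue `μ₁`, the equation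
`λ - s·a_{ℓ-1}(λ)/a_ℓ(λ) = μ₁` has at most one solution `λ > 2√(d-1)`. -/
theorem augmentation_equation_unique_solution
    {V : Type*} [Fintype V] [DecidableEq V]
    (d s ℓ : ℕ) (hd : 3 ≤ d) (hℓ : 2 ≤ ℓ)
    (G' : SimpleGraph V) (hG'c : G'.Connected)
    (a : ℕ → ℝ → ℝ)
    (ha0 : ∀ lam, a 0 lam = 1) (ha1 : ∀ lam, a 1 lam = lam)
    (harec : ∀ i lam, a (i + 2) lam = lam * a (i + 1) lam - (d - 1) * a i lam) :
    ∀ x y : ℝ, 2 * Real.sqrt (d - 1) < x → 2 * Real.sqrt (d - 1) < y →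
      x - s * a (ℓ - 1) x / a ℓ x = adjEig G' 0 →
      y - s * a (ℓ - 1) y / a ℓ y = adjEig G' 0 →
      x = y :=
  augmentation_equation_unique_solution_general d s ℓ hd G' a ha0 ha1 harec
end

section
/- Fix integers d ≥ 3, s ≥ 1, ℓ ≥ 2, a real ε ≥ 0, and a graph G' whose second largest eigenvalue is strictly less than 2√(d−1+ε) − s/(√(d−1+ε) + √ε). Let G be obtained from G' by attaching s disjoint (d−1)-ary trees with ℓ levels to every vertex of G' (joining each root by an edge). Then the second largest eigenvalue of G is less than 2√(d−1+ε). -/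
/-!
Suppose `λ₂(G) ≥ 2√(d-1+ε)` and take orthogonal eigenvectors `f₁, f₂` of `G` for
`λ₁(G) ≥ λ₂(G)`. On the attached trees an eigenfunction with eigenvalue `θ ≥ 2√(d-1+ε)` is
determined by its values on `G'`: one level down it is multiplied by a ratio `treeRatio (d-1) θ k`
lying in `[0, 1/(√(d-1+ε) + √ε)]`. Hence the restriction of `fⱼ` to `G'` is an eigenvector of
`G'` with eigenvalue `θⱼ - s · treeRatio (d-1) θⱼ ℓ > λ₂(G')`, so both restrictions are multiples
of the top eigenvector of `G'`: `f₂ = c f₁` on `G'` with `c ≠ 0`. As the ratios are nonnegative,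
every level sum `∑_{X i} f₁ f₂` has the sign of `c`, contradicting `f₁ ⬝ᵥ f₂ = 0`.
-/

open scoped RealInnerProductSpace
open Matrix

namespace Matrix.IsHermitian

variable {n : Type*} [Fintype n] {A : Matrix n n ℝ}

theorem dotProduct_eq_zero_of_mulVec_eq_smul (hA : A.IsHermitian) {u v : n → ℝ} {α β : ℝ}
    (hu : A *ᵥ u = α • u) (hv : A *ᵥ v = β • v) (hαβ : α ≠ β) : u ⬝ᵥ v = 0 := by
  have hAt : Aᵀ = A := hA
  have h : α * (u ⬝ᵥ v) = β * (u ⬝ᵥ v) :=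
    calc α * (u ⬝ᵥ v) = (A *ᵥ u) ⬝ᵥ v := by rw [hu, smul_dotProduct, smul_eq_mul]
      _ = u ⬝ᵥ (A *ᵥ v) := by
        rw [dotProduct_comm, dotProduct_mulVec, ← mulVec_transpose, hAt, dotProduct_comm]
      _ = β * (u ⬝ᵥ v) := by rw [hv, dotProduct_smul, smul_eq_mul]
  exact (mul_eq_mul_right_iff.mp h).resolve_left hαβ

variable [DecidableEq n]

theorem eq_sum_dotProduct_smul_eigenvectorBasis (hA : A.IsHermitian) (v : n → ℝ) :
    v = ∑ j, (v ⬝ᵥ ⇑(hA.eigenvectorBasis j)) • ⇑(hA.eigenvectorBasis j) := by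
  have h := congrArg WithLp.ofLp (hA.eigenvectorBasis.sum_repr' (WithLp.toLp 2 v))
  simpa [EuclideanSpace.inner_eq_star_dotProduct, WithLp.ofLp_sum] using h.symm

theorem eq_smul_eigenvectorBasis_of_mulVec_eq_smul (hA : A.IsHermitian) {v : n → ℝ} {ν : ℝ}
    (hv : A *ᵥ v = ν • v) {i : n} (hi : ∀ j ≠ i, hA.eigenvalues j ≠ ν) :
    v = (v ⬝ᵥ ⇑(hA.eigenvectorBasis i)) • ⇑(hA.eigenvectorBasis i) := by
  conv_lhs => rw [hA.eq_sum_dotProduct_smul_eigenvectorBasis v]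
  refine Finset.sum_eq_single i (fun j _ hj => ?_) (by simp)
  rw [dotProduct_comm,
    hA.dotProduct_eq_zero_of_mulVec_eq_smul (hA.mulVec_eigenvectorBasis j) hv (hi j hj), zero_smul]

end Matrix.IsHermitian

section matEig

variable {N : ℕ} {A : Matrix (Fin N) (Fin N) ℝ} (hA : A.IsHermitian)

theorem matEig_of_lt {k : ℕ} (hk : k < N) :
    matEig A hA k = hA.eigenvalues (Tuple.sort hA.eigenvalues (Fin.rev ⟨k, hk⟩)) :=
  dif_pos hk

theorem matEig_one_le_matEig_zero (hN : 1 < N) : matEig A hA 1 ≤ matEig A hA 0 := by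
  rw [matEig_of_lt hA hN, matEig_of_lt hA (by omega)]
  exact Tuple.monotone_sort hA.eigenvalues (by simp [Fin.le_def, Fin.rev]; omega)

theorem eigenvalues_le_matEig_one (hN : 1 < N) {j : Fin N}
    (hj : j ≠ Tuple.sort hA.eigenvalues (Fin.rev ⟨0, by omega⟩)) :
    hA.eigenvalues j ≤ matEig A hA 1 := by
  set σ := Tuple.sort hA.eigenvalues
  have hle : σ.symm j ≤ Fin.rev ⟨1, hN⟩ := by
    have hne : σ.symm j ≠ Fin.rev ⟨0, by omega⟩ := by rintro h; exact hj (by rw [← h]; simp)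
    have := (σ.symm j).isLt
    simp only [ne_eq, Fin.ext_iff, Fin.val_rev] at hne
    simp only [Fin.le_def, Fin.val_rev]
    omega
  simpa [σ, matEig_of_lt hA hN] using Tuple.monotone_sort hA.eigenvalues hle

theorem exists_eq_smul_of_matEig_one_lt (hN : 1 < N) {v w : Fin N → ℝ} {μ ν : ℝ}
    (hv : A *ᵥ v = μ • v) (hw : A *ᵥ w = ν • w) (hμ : matEig A hA 1 < μ)
    (hν : matEig A hA 1 < ν) (hv0 : v ≠ 0) : ∃ c : ℝ, w = c • v := by
  have hsimple : ∀ θ, matEig A hA 1 < θ → ∀ j ≠ Tuple.sort hA.eigenvalues (Fin.rev ⟨0, by omega⟩),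
      hA.eigenvalues j ≠ θ := fun θ hθ j hj => ((eigenvalues_le_matEig_one hA hN hj).trans_lt hθ).ne
  have hv' := hA.eq_smul_eigenvectorBasis_of_mulVec_eq_smul hv (hsimple μ hμ)
  have hw' := hA.eq_smul_eigenvectorBasis_of_mulVec_eq_smul hw (hsimple ν hν)
  set a := v ⬝ᵥ ⇑(hA.eigenvectorBasis (Tuple.sort hA.eigenvalues (Fin.rev ⟨0, by omega⟩)))
  have ha : a ≠ 0 := by rintro h; exact hv0 (by rw [hv', h, zero_smul])
  exact ⟨_ / a, by rw [hw', hv', smul_smul, div_mul_cancel₀ _ ha]⟩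

theorem exists_orthogonal_matEig_eigenvectors (hN : 1 < N) :
    ∃ x₁ x₂ : Fin N → ℝ, x₁ ≠ 0 ∧ x₂ ≠ 0 ∧ x₁ ⬝ᵥ x₂ = 0 ∧
      A *ᵥ x₁ = matEig A hA 0 • x₁ ∧ A *ᵥ x₂ = matEig A hA 1 • x₂ := by
  set b := hA.eigenvectorBasis
  set σ := Tuple.sort hA.eigenvalues
  have hb : ∀ i, ⇑(b i) ≠ 0 := fun i h =>
    b.orthonormal.ne_zero i (by simpa using congrArg (WithLp.toLp 2) h)
  have hne : σ (Fin.rev ⟨0, by omega⟩) ≠ σ (Fin.rev ⟨1, hN⟩) := by simp [Fin.ext_iff]; omega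
  refine ⟨b _, b _, hb _, hb _, b.orthonormal.2 hne.symm, ?_, ?_⟩
  · rw [matEig_of_lt hA (by omega)]; exact hA.mulVec_eigenvectorBasis _
  · rw [matEig_of_lt hA hN]; exact hA.mulVec_eigenvectorBasis _

end matEig

theorem Matrix.submatrix_mulVec_eq_smul_iff {m n α : Type*} [Fintype m] [Fintype n]
    [NonUnitalNonAssocSemiring α] (M : Matrix m m α) (e : m ≃ n) (x : n → α) (μ : α) :
    M.submatrix e.symm e.symm *ᵥ x = μ • x ↔ M *ᵥ (x ∘ e) = μ • (x ∘ e) := by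
  rw [submatrix_mulVec_equiv, Equiv.symm_symm, Equiv.comp_symm_eq]
  rfl

namespace SimpleGraph

variable {V : Type*} [Fintype V] [DecidableEq V] (G : SimpleGraph V)

theorem adjEig_one_le_adjEig_zero (hV : 1 < Fintype.card V) : adjEig G 1 ≤ adjEig G 0 :=
  matEig_one_le_matEig_zero _ hV

variable [DecidableRel G.Adj]

theorem adjEig_eq_matEig (k : ℕ) :
    adjEig G k = matEig ((G.adjMatrix ℝ).submatrix (Fintype.equivFin V).symm
      (Fintype.equivFin V).symm) (adj_isHermitian G) k := by
  unfold adjEig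
  congr!

theorem exists_orthogonal_adjEig_eigenvectors (hV : 1 < Fintype.card V) :
    ∃ f₁ f₂ : V → ℝ, f₁ ≠ 0 ∧ f₂ ≠ 0 ∧ f₁ ⬝ᵥ f₂ = 0 ∧
      G.adjMatrix ℝ *ᵥ f₁ = adjEig G 0 • f₁ ∧ G.adjMatrix ℝ *ᵥ f₂ = adjEig G 1 • f₂ := by
  obtain ⟨x₁, x₂, h₁, h₂, h₁₂, hx₁, hx₂⟩ :=
    exists_orthogonal_matEig_eigenvectors (adj_isHermitian G) hV
  set e := Fintype.equivFin V
  refine ⟨x₁ ∘ e, x₂ ∘ e, fun h => h₁ (e.surjective.injective_comp_right h),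
    fun h => h₂ (e.surjective.injective_comp_right h), ?_, ?_, ?_⟩
  · simpa [dotProduct] using (e.sum_comp fun i => x₁ i * x₂ i).trans h₁₂
  · rw [adjEig_eq_matEig]; exact (submatrix_mulVec_eq_smul_iff _ e _ _).1 hx₁
  · rw [adjEig_eq_matEig]; exact (submatrix_mulVec_eq_smul_iff _ e _ _).1 hx₂

theorem exists_eq_smul_of_adjEig_one_lt (hV : 1 < Fintype.card V) {f g : V → ℝ} {μ ν : ℝ}
    (hf : G.adjMatrix ℝ *ᵥ f = μ • f) (hg : G.adjMatrix ℝ *ᵥ g = ν • g)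
    (hμ : adjEig G 1 < μ) (hν : adjEig G 1 < ν) (hf0 : f ≠ 0) : ∃ c : ℝ, g = c • f := by
  set e := Fintype.equivFin V
  rw [adjEig_eq_matEig] at hμ hν
  obtain ⟨c, hc⟩ := exists_eq_smul_of_matEig_one_lt (adj_isHermitian G) hV
    ((submatrix_mulVec_eq_smul_iff _ e (f ∘ e.symm) μ).2 (by simpa [Function.comp_assoc] using hf))
    ((submatrix_mulVec_eq_smul_iff _ e (g ∘ e.symm) ν).2 (by simpa [Function.comp_assoc] using hg))
    hμ hν (fun h => hf0 (e.symm.surjective.injective_comp_right h))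
  exact ⟨c, e.symm.surjective.injective_comp_right hc⟩

end SimpleGraph

theorem SimpleGraph.sum_neighborFinset_eq_of_mulVec_eq_smul {W : Type*} [Fintype W]
    {G : SimpleGraph W} [DecidableRel G.Adj] {f : W → ℝ} {θ : ℝ}
    (hf : G.adjMatrix ℝ *ᵥ f = θ • f) (w : W) : ∑ u ∈ G.neighborFinset w, f u = θ * f w := by
  simpa [SimpleGraph.adjMatrix_mulVec_apply] using congrFun hf w

theorem Finset.sum_sum_filter_eq_mul_sum {α β R : Type*} [NonAssocSemiring R]
    (A : Finset α) (B : Finset β) (r : α → β → Prop) [∀ a b, Decidable (r a b)] (n : ℕ)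
    (hn : ∀ a ∈ A, (B.filter (r a ·)).card = n) (F : α → R) :
    ∑ b ∈ B, ∑ a ∈ A.filter (r · b), F a = n * ∑ a ∈ A, F a := by
  simp_rw [Finset.sum_filter]
  rw [Finset.sum_comm, Finset.mul_sum]
  refine Finset.sum_congr rfl fun a ha => ?_
  rw [← Finset.sum_filter, Finset.sum_const, hn a ha, nsmul_eq_mul]

theorem sqrt_add_sqrt_add_div_eq {m ε : ℝ} (hm : 0 ≤ m) (hε : 0 ≤ ε) :
    (√(m + ε) + √ε) + m / (√(m + ε) + √ε) = 2 * √(m + ε) := by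
  have hQ := Real.sq_sqrt (add_nonneg hm hε)
  have hR := Real.sq_sqrt hε
  have hQ0 := Real.sqrt_nonneg (m + ε)
  have hR0 := Real.sqrt_nonneg ε
  rcases (add_nonneg hQ0 hR0).eq_or_lt with h | h
  · rw [← h, div_zero]
    nlinarith
  · have : m / (√(m + ε) + √ε) = √(m + ε) - √ε := by
      rw [div_eq_iff h.ne']
      nlinarith
    linarith

/-- `treeRatio m θ k` is the paper's `a_{k-1}(θ) / a_k(θ)`: if the root of an `m`-ary tree with
`k` levels hangs below `p`, a `θ`-eigenfunction `f` takes the value `treeRatio m θ k * f p` at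
that root. -/
noncomputable def treeRatio (m θ : ℝ) : ℕ → ℝ
  | 0 => 0
  | k + 1 => (θ - m * treeRatio m θ k)⁻¹

section treeRatio

variable {m θ c : ℝ}

theorem le_sub_mul_treeRatio (hm : 0 ≤ m) (hc : 0 < c) (hθ : c + m / c ≤ θ) (k : ℕ) :
    c ≤ θ - m * treeRatio m θ k := by
  induction k with
  | zero =>
    have := div_nonneg hm hc.le
    simp only [treeRatio, mul_zero, sub_zero]
    linarith
  | succ k ih =>
    have h : m * treeRatio m θ (k + 1) ≤ m / c := by
      rw [div_eq_mul_inv]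
      exact mul_le_mul_of_nonneg_left (inv_anti₀ hc ih) hm
    linarith

theorem treeRatio_le_inv (hm : 0 ≤ m) (hc : 0 < c) (hθ : c + m / c ≤ θ) (k : ℕ) :
    treeRatio m θ k ≤ c⁻¹ := by
  cases k with
  | zero => simp [treeRatio, hc.le]
  | succ k => exact inv_anti₀ hc (le_sub_mul_treeRatio hm hc hθ k)

theorem treeRatio_nonneg (hθ : ∀ k, 0 < θ - m * treeRatio m θ k) (k : ℕ) :
    0 ≤ treeRatio m θ k := by
  cases k with
  | zero => exact le_rfl
  | succ k => exact (inv_pos.2 (hθ k)).le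

theorem sub_mul_treeRatio_pos {ε : ℝ} (hm : 0 < m) (hε : 0 ≤ ε) (hθ : 2 * √(m + ε) ≤ θ)
    (k : ℕ) : 0 < θ - m * treeRatio m θ k := by
  have hc : 0 < √(m + ε) + √ε := by positivity
  exact hc.trans_le (le_sub_mul_treeRatio hm.le hc
    ((sqrt_add_sqrt_add_div_eq hm.le hε).trans_le hθ) k)

theorem treeRatio_le_inv_sqrt_add_sqrt {ε : ℝ} (hm : 0 < m) (hε : 0 ≤ ε)
    (hθ : 2 * √(m + ε) ≤ θ) (k : ℕ) : treeRatio m θ k ≤ (√(m + ε) + √ε)⁻¹ :=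
  treeRatio_le_inv hm.le (by positivity) ((sqrt_add_sqrt_add_div_eq hm.le hε).trans_le hθ) k

end treeRatio

/-- `X i` is the set of vertices at depth `i` of the attached `(d - 1)`-ary trees; depth `0` is
the copy `ι '' V` of `G'`. -/
structure IsTreeAugmentation_s14 {V W : Type*} [DecidableEq W] (G' : SimpleGraph V)
    (G : SimpleGraph W) [DecidableRel G.Adj] (ι : V ↪ W) (X : ℕ → Finset W) (d s ℓ : ℕ) :
    Prop where
  mem_zero_iff : ∀ w : W, w ∈ X 0 ↔ ∃ a : V, ι a = w
  exists_mem_level : ∀ w : W, ∃ i ≤ ℓ, w ∈ X i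
  disjoint_levels : ∀ i j, i ≤ ℓ → j ≤ ℓ → i ≠ j → Disjoint (X i) (X j)
  adj_iff : ∀ a b : V, G.Adj (ι a) (ι b) ↔ G'.Adj a b
  base_adj : ∀ (a : V) (w : W), G.Adj (ι a) w → (∃ b : V, ι b = w) ∨ w ∈ X 1
  card_roots : ∀ a : V, ((X 1).filter (fun w => G.Adj (ι a) w)).card = s
  card_children : ∀ i, 1 ≤ i → i < ℓ → ∀ u ∈ X i,
    ((X (i + 1)).filter (fun w => G.Adj u w)).card = d - 1
  existsUnique_parent : ∀ i, 1 ≤ i → i ≤ ℓ → ∀ u ∈ X i, ∃! p, p ∈ X (i - 1) ∧ G.Adj u p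
  adj_mem_levels : ∀ i, 1 ≤ i → i ≤ ℓ → ∀ u ∈ X i, ∀ w, G.Adj u w → w ∈ X (i - 1) ∪ X (i + 1)
  level_succ_eq_empty : X (ℓ + 1) = ∅

namespace IsTreeAugmentation_s14

open Finset SimpleGraph

variable {V W : Type*} [DecidableEq W] {G' : SimpleGraph V}
  {G : SimpleGraph W} [DecidableRel G.Adj] {ι : V ↪ W} {X : ℕ → Finset W} {d s ℓ : ℕ}
  {f f₁ f₂ : W → ℝ} {θ θ₁ θ₂ : ℝ}

theorem exists_card_children (hT : IsTreeAugmentation_s14 G' G ι X d s ℓ) {i : ℕ} (hi : 1 ≤ i)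
    (hiℓ : i ≤ ℓ) : ∃ n : ℕ, ∀ p ∈ X (i - 1), ((X i).filter (G.Adj p ·)).card = n := by
  rcases hi.eq_or_lt with rfl | hi
  · refine ⟨s, fun p hp => ?_⟩
    obtain ⟨a, rfl⟩ := (hT.mem_zero_iff p).1 hp
    exact hT.card_roots a
  · refine ⟨d - 1, fun p hp => ?_⟩
    simpa [Nat.sub_add_cancel hi.le] using hT.card_children (i - 1) (by omega) (by omega) p hp

theorem sum_level_zero [Fintype V] (hT : IsTreeAugmentation_s14 G' G ι X d s ℓ) (F : W → ℝ) :
    ∑ u ∈ X 0, F u = ∑ a, F (ι a) := by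
  rw [show X 0 = univ.map ι by ext w; simp [hT.mem_zero_iff], sum_map]

variable [Fintype W]

theorem sum_neighborFinset_eq_add_sum_children (hT : IsTreeAugmentation_s14 G' G ι X d s ℓ)
    (f : W → ℝ) {i : ℕ} (hi : 1 ≤ i) (hiℓ : i ≤ ℓ) {u p : W} (hu : u ∈ X i)
    (hp : p ∈ X (i - 1)) (hup : G.Adj u p) :
    ∑ w ∈ G.neighborFinset u, f w = f p + ∑ w ∈ (X (i + 1)).filter (G.Adj u ·), f w := by
  have hp' : p ∉ X (i + 1) := by
    intro hp'
    rcases hiℓ.lt_or_eq with hlt | rfl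
    · exact disjoint_left.mp (hT.disjoint_levels (i - 1) (i + 1) (by omega) hlt (by omega)) hp hp'
    · simp [hT.level_succ_eq_empty] at hp'
  have hN : G.neighborFinset u = insert p ((X (i + 1)).filter (G.Adj u ·)) := by
    ext w
    simp only [mem_neighborFinset, mem_insert, mem_filter]
    constructor
    · intro hw
      rcases mem_union.mp (hT.adj_mem_levels i hi hiℓ u hu w hw) with h | h
      · exact Or.inl ((hT.existsUnique_parent i hi hiℓ u hu).unique ⟨h, hw⟩ ⟨hp, hup⟩)
      · exact Or.inr ⟨h, hw⟩
    · rintro (rfl | ⟨-, hw⟩) <;> assumption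
  rw [hN, sum_insert (by simp [hp'])]

theorem sum_neighborFinset_embedding [Fintype V] [DecidableRel G'.Adj]
    (hT : IsTreeAugmentation_s14 G' G ι X d s ℓ) (hℓ : 1 ≤ ℓ) (f : W → ℝ) (a : V) :
    ∑ w ∈ G.neighborFinset (ι a), f w =
      ∑ b ∈ G'.neighborFinset a, f (ι b) + ∑ w ∈ (X 1).filter (G.Adj (ι a) ·), f w := by
  have hdisj : Disjoint ((G'.neighborFinset a).map ι) ((X 1).filter (G.Adj (ι a) ·)) := by
    refine disjoint_left.mpr fun w hw hw1 => ?_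
    obtain ⟨b, -, rfl⟩ := mem_map.mp hw
    exact disjoint_left.mp (hT.disjoint_levels 0 1 (by omega) hℓ (by omega))
      ((hT.mem_zero_iff _).2 ⟨b, rfl⟩) (mem_filter.mp hw1).1
  have hN : G.neighborFinset (ι a) =
      (G'.neighborFinset a).map ι ∪ (X 1).filter (G.Adj (ι a) ·) := by
    ext w
    simp only [mem_neighborFinset, mem_union, mem_map, mem_filter]
    constructor
    · intro hw
      rcases hT.base_adj a w hw with ⟨b, rfl⟩ | h
      · exact Or.inl ⟨b, (hT.adj_iff a b).1 hw, rfl⟩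
      · exact Or.inr ⟨h, hw⟩
    · rintro (⟨b, hb, rfl⟩ | ⟨-, hw⟩)
      · exact (hT.adj_iff a b).2 hb
      · exact hw
  rw [hN, sum_union hdisj, sum_map]

theorem eq_treeRatio_succ_mul (hT : IsTreeAugmentation_s14 G' G ι X d s ℓ)
    (hf : G.adjMatrix ℝ *ᵥ f = θ • f) {k : ℕ}
    (hθ : 0 < θ - (d - 1 : ℕ) * treeRatio (d - 1 : ℕ) θ k) {i : ℕ} (hi : 1 ≤ i) (hiℓ : i ≤ ℓ)
    {u p : W} (hu : u ∈ X i) (hp : p ∈ X (i - 1)) (hup : G.Adj u p)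
    (hchildren : ∑ w ∈ (X (i + 1)).filter (G.Adj u ·), f w =
      (d - 1 : ℕ) * treeRatio (d - 1 : ℕ) θ k * f u) :
    f u = treeRatio (d - 1 : ℕ) θ (k + 1) * f p := by
  have h := hT.sum_neighborFinset_eq_add_sum_children f hi hiℓ hu hp hup
  rw [sum_neighborFinset_eq_of_mulVec_eq_smul hf, hchildren] at h
  rw [treeRatio, eq_inv_mul_iff_mul_eq₀ hθ.ne']
  linarith

theorem eq_treeRatio_mul_of_adj (hT : IsTreeAugmentation_s14 G' G ι X d s ℓ)
    (hf : G.adjMatrix ℝ *ᵥ f = θ • f) (hθ : ∀ k, 0 < θ - (d - 1 : ℕ) * treeRatio (d - 1 : ℕ) θ k)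
    {i : ℕ} (hi : 1 ≤ i) (hiℓ : i ≤ ℓ) {u p : W} (hu : u ∈ X i) (hp : p ∈ X (i - 1))
    (hup : G.Adj u p) :
    f u = treeRatio (d - 1 : ℕ) θ (ℓ + 1 - i) * f p := by
  suffices H : ∀ k i, i + k = ℓ → 1 ≤ i → ∀ u ∈ X i, ∀ p ∈ X (i - 1), G.Adj u p →
      f u = treeRatio (d - 1 : ℕ) θ (k + 1) * f p by
    rw [show ℓ + 1 - i = ℓ - i + 1 by omega]
    exact H (ℓ - i) i (by omega) hi u hu p hp hup
  intro k
  induction k with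
  | zero =>
    intro i hiℓ hi u hu p hp hup
    refine hT.eq_treeRatio_succ_mul hf (hθ 0) hi (by omega) hu hp hup ?_
    simp [show i + 1 = ℓ + 1 by omega, hT.level_succ_eq_empty, treeRatio]
  | succ k ih =>
    intro i hiℓ hi u hu p hp hup
    refine hT.eq_treeRatio_succ_mul hf (hθ _) hi (by omega) hu hp hup ?_
    have hc : ∀ w ∈ (X (i + 1)).filter (G.Adj u ·),
        f w = treeRatio (d - 1 : ℕ) θ (k + 1) * f u := fun w hw =>
      ih (i + 1) (by omega) (by omega) w (mem_filter.mp hw).1 u (by simpa using hu)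
        (mem_filter.mp hw).2.symm
    rw [sum_congr rfl hc, sum_const, hT.card_children i hi (by omega) u hu, nsmul_eq_mul,
      mul_assoc]

theorem mulVec_comp_eq_smul [Fintype V] [DecidableRel G'.Adj]
    (hT : IsTreeAugmentation_s14 G' G ι X d s ℓ) (hℓ : 1 ≤ ℓ) (hf : G.adjMatrix ℝ *ᵥ f = θ • f)
    (hθ : ∀ k, 0 < θ - (d - 1 : ℕ) * treeRatio (d - 1 : ℕ) θ k) :
    G'.adjMatrix ℝ *ᵥ (f ∘ ι) = (θ - s * treeRatio (d - 1 : ℕ) θ ℓ) • (f ∘ ι) := by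
  funext a
  have h := hT.sum_neighborFinset_embedding hℓ f a
  have hroots : ∑ w ∈ (X 1).filter (G.Adj (ι a) ·), f w =
      s * (treeRatio (d - 1 : ℕ) θ ℓ * f (ι a)) := by
    rw [sum_congr rfl fun w hw => hT.eq_treeRatio_mul_of_adj hf hθ le_rfl hℓ
      (mem_filter.mp hw).1 ((hT.mem_zero_iff _).2 ⟨a, rfl⟩) (mem_filter.mp hw).2.symm,
      sum_const, hT.card_roots, nsmul_eq_mul, Nat.add_sub_cancel]
  rw [sum_neighborFinset_eq_of_mulVec_eq_smul hf, hroots] at h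
  simp only [adjMatrix_mulVec_apply, Function.comp_apply, Pi.smul_apply, smul_eq_mul]
  linarith

theorem comp_ne_zero (hT : IsTreeAugmentation_s14 G' G ι X d s ℓ) (hf : G.adjMatrix ℝ *ᵥ f = θ • f)
    (hθ : ∀ k, 0 < θ - (d - 1 : ℕ) * treeRatio (d - 1 : ℕ) θ k) (hf0 : f ≠ 0) : f ∘ ι ≠ 0 := by
  intro h0
  have hlevel : ∀ i ≤ ℓ, ∀ u ∈ X i, f u = 0 := by
    intro i
    induction i with
    | zero =>
      intro _ u hu
      obtain ⟨a, rfl⟩ := (hT.mem_zero_iff u).1 hu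
      exact congrFun h0 a
    | succ i ih =>
      intro hi u hu
      obtain ⟨p, ⟨hp, hup⟩, -⟩ := hT.existsUnique_parent (i + 1) (by omega) hi u hu
      rw [hT.eq_treeRatio_mul_of_adj hf hθ (by omega) hi hu hp hup, ih (by omega) p hp, mul_zero]
  exact hf0 (funext fun w =>
    let ⟨i, hi, hw⟩ := hT.exists_mem_level w
    hlevel i hi w hw)

theorem exists_sum_level_eq_mul (hT : IsTreeAugmentation_s14 G' G ι X d s ℓ)
    (hf₁ : G.adjMatrix ℝ *ᵥ f₁ = θ₁ • f₁)
    (hθ₁ : ∀ k, 0 < θ₁ - (d - 1 : ℕ) * treeRatio (d - 1 : ℕ) θ₁ k)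
    (hf₂ : G.adjMatrix ℝ *ᵥ f₂ = θ₂ • f₂)
    (hθ₂ : ∀ k, 0 < θ₂ - (d - 1 : ℕ) * treeRatio (d - 1 : ℕ) θ₂ k)
    {i : ℕ} (hi : 1 ≤ i) (hiℓ : i ≤ ℓ) :
    ∃ q ≥ 0, ∑ u ∈ X i, f₁ u * f₂ u = q * ∑ u ∈ X (i - 1), f₁ u * f₂ u := by
  obtain ⟨n, hn⟩ := hT.exists_card_children hi hiℓ
  set t₁ := treeRatio (d - 1 : ℕ) θ₁ (ℓ + 1 - i)
  set t₂ := treeRatio (d - 1 : ℕ) θ₂ (ℓ + 1 - i)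
  have hu : ∀ u ∈ X i,
      f₁ u * f₂ u = t₁ * t₂ * ∑ p ∈ (X (i - 1)).filter (G.Adj · u), f₁ p * f₂ p := by
    intro u hu
    obtain ⟨p, ⟨hp, hup⟩, huniq⟩ := hT.existsUnique_parent i hi hiℓ u hu
    have hparent : (X (i - 1)).filter (G.Adj · u) = {p} := by
      ext q
      simp only [mem_filter, mem_singleton, G.adj_comm q u]
      exact ⟨huniq q, by rintro rfl; exact ⟨hp, hup⟩⟩
    rw [hparent, sum_singleton, hT.eq_treeRatio_mul_of_adj hf₁ hθ₁ hi hiℓ hu hp hup,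
      hT.eq_treeRatio_mul_of_adj hf₂ hθ₂ hi hiℓ hu hp hup]
    ring
  refine ⟨t₁ * t₂ * n, mul_nonneg (mul_nonneg (treeRatio_nonneg hθ₁ _) (treeRatio_nonneg hθ₂ _))
    n.cast_nonneg, ?_⟩
  rw [sum_congr rfl hu, ← mul_sum, sum_sum_filter_eq_mul_sum _ _ G.Adj n hn]
  ring

theorem sum_eq_sum_levels (hT : IsTreeAugmentation_s14 G' G ι X d s ℓ) (F : W → ℝ) :
    ∑ w, F w = ∑ i ∈ range (ℓ + 1), ∑ u ∈ X i, F u := by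
  rw [← sum_biUnion]
  · congr
    ext w
    obtain ⟨i, hi, hw⟩ := hT.exists_mem_level w
    simp only [mem_univ, mem_biUnion, mem_range, true_iff]
    exact ⟨i, by omega, hw⟩
  · intro i hi j hj hij
    simp only [coe_range, Set.mem_Iio] at hi hj
    exact hT.disjoint_levels i j (by omega) (by omega) hij

theorem exists_sum_level_eq_mul_sum_level_zero (hT : IsTreeAugmentation_s14 G' G ι X d s ℓ)
    (hf₁ : G.adjMatrix ℝ *ᵥ f₁ = θ₁ • f₁)
    (hθ₁ : ∀ k, 0 < θ₁ - (d - 1 : ℕ) * treeRatio (d - 1 : ℕ) θ₁ k)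
    (hf₂ : G.adjMatrix ℝ *ᵥ f₂ = θ₂ • f₂)
    (hθ₂ : ∀ k, 0 < θ₂ - (d - 1 : ℕ) * treeRatio (d - 1 : ℕ) θ₂ k) {i : ℕ} (hi : i ≤ ℓ) :
    ∃ q ≥ 0, ∑ u ∈ X i, f₁ u * f₂ u = q * ∑ u ∈ X 0, f₁ u * f₂ u := by
  induction i with
  | zero => exact ⟨1, zero_le_one, (one_mul _).symm⟩
  | succ i ih =>
    obtain ⟨q, hq, hSq⟩ := ih (by omega)
    obtain ⟨q', hq', hSq'⟩ := hT.exists_sum_level_eq_mul hf₁ hθ₁ hf₂ hθ₂ (by omega) hi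
    refine ⟨q' * q, mul_nonneg hq' hq, ?_⟩
    rw [hSq', Nat.add_sub_cancel, hSq, mul_assoc]

theorem dotProduct_ne_zero [Fintype V] (hT : IsTreeAugmentation_s14 G' G ι X d s ℓ)
    (hf₁ : G.adjMatrix ℝ *ᵥ f₁ = θ₁ • f₁)
    (hθ₁ : ∀ k, 0 < θ₁ - (d - 1 : ℕ) * treeRatio (d - 1 : ℕ) θ₁ k)
    (hf₂ : G.adjMatrix ℝ *ᵥ f₂ = θ₂ • f₂)
    (hθ₂ : ∀ k, 0 < θ₂ - (d - 1 : ℕ) * treeRatio (d - 1 : ℕ) θ₂ k)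
    (h₁ : f₁ ∘ ι ≠ 0) {c : ℝ} (hc : c ≠ 0) (h₂₁ : f₂ ∘ ι = c • (f₁ ∘ ι)) : f₁ ⬝ᵥ f₂ ≠ 0 := by
  set S₀ := ∑ u ∈ X 0, f₁ u * f₂ u
  have hS₀ : S₀ = c * ∑ a, f₁ (ι a) ^ 2 := by
    simp only [S₀, hT.sum_level_zero, mul_sum]
    refine sum_congr rfl fun a _ => ?_
    rw [show f₂ (ι a) = c * f₁ (ι a) from congrFun h₂₁ a]
    ring
  have hsq : 0 < ∑ a, f₁ (ι a) ^ 2 := by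
    obtain ⟨a, ha⟩ := Function.ne_iff.mp h₁
    exact sum_pos' (fun _ _ => sq_nonneg _) ⟨a, mem_univ a, sq_pos_of_ne_zero ha⟩
  have hS₀0 : S₀ ≠ 0 := hS₀ ▸ mul_ne_zero hc hsq.ne'
  have hpos : 0 < (f₁ ⬝ᵥ f₂) * S₀ := by
    rw [dotProduct, hT.sum_eq_sum_levels, sum_mul]
    refine sum_pos' (fun i hi => ?_) ⟨0, by simp, mul_self_pos.mpr hS₀0⟩
    obtain ⟨q, hq, hSq⟩ := hT.exists_sum_level_eq_mul_sum_level_zero hf₁ hθ₁ hf₂ hθ₂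
      (Nat.lt_succ_iff.mp (mem_range.mp hi))
    rw [hSq, mul_assoc]
    exact mul_nonneg hq (mul_self_nonneg _)
  intro h
  rw [h, zero_mul] at hpos
  exact lt_irrefl _ hpos

end IsTreeAugmentation_s14

theorem tree_augmentation_second_eigenvalue_general
    {V W : Type*} [Fintype V] [DecidableEq V] [Fintype W] [DecidableEq W]
    (d s ℓ : ℕ) (hd : 3 ≤ d) (hℓ : 2 ≤ ℓ)
    (hV : 1 < Fintype.card V) (hW : 1 < Fintype.card W)
    (ε : ℝ) (hε : 0 ≤ ε)
    (G' : SimpleGraph V) [DecidableRel G'.Adj]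
    (Gbig : SimpleGraph W) [DecidableRel Gbig.Adj]
    (ι : V ↪ W) (X : ℕ → Finset W)
    (hX0 : ∀ w : W, w ∈ X 0 ↔ ∃ a : V, ι a = w)
    (hcover : ∀ w : W, ∃ i ≤ ℓ, w ∈ X i)
    (hdisj : ∀ i j, i ≤ ℓ → j ≤ ℓ → i ≠ j → Disjoint (X i) (X j))
    (hbase : ∀ a b : V, Gbig.Adj (ι a) (ι b) ↔ G'.Adj a b)
    (hbase_nbrs : ∀ (a : V) (w : W), Gbig.Adj (ι a) w → (∃ b : V, ι b = w) ∨ w ∈ X 1)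
    (hroots : ∀ a : V, ((X 1).filter (fun w => Gbig.Adj (ι a) w)).card = s)
    (hchild : ∀ i, 1 ≤ i → i < ℓ → ∀ u ∈ X i,
        ((X (i + 1)).filter (fun w => Gbig.Adj u w)).card = d - 1)
    (hparent : ∀ i, 1 ≤ i → i ≤ ℓ → ∀ u ∈ X i, ∃! p, p ∈ X (i - 1) ∧ Gbig.Adj u p)
    (hnbrs : ∀ i, 1 ≤ i → i ≤ ℓ → ∀ u ∈ X i, ∀ w, Gbig.Adj u w → w ∈ X (i - 1) ∪ X (i + 1))
    (hXtop : X (ℓ + 1) = ∅)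
    (hsecond : adjEig G' 1 <
      2 * Real.sqrt (d - 1 + ε) - s / (Real.sqrt (d - 1 + ε) + Real.sqrt ε)) :
    adjEig Gbig 1 < 2 * Real.sqrt (d - 1 + ε) := by
  have hT : IsTreeAugmentation_s14 G' Gbig ι X d s ℓ :=
    ⟨hX0, hcover, hdisj, hbase, hbase_nbrs, hroots, hchild, hparent, hnbrs, hXtop⟩
  have hm : ((d - 1 : ℕ) : ℝ) = d - 1 := by rw [Nat.cast_sub (by omega), Nat.cast_one]
  have hm0 : (0 : ℝ) < d - 1 := by
    have : (3 : ℝ) ≤ d := by exact_mod_cast hd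
    linarith
  rw [← hm] at hsecond hm0 ⊢
  have hpush : ∀ θ, 2 * √((d - 1 : ℕ) + ε) ≤ θ →
      adjEig G' 1 < θ - s * treeRatio (d - 1 : ℕ) θ ℓ := by
    intro θ hθ
    have := mul_le_mul_of_nonneg_left (treeRatio_le_inv_sqrt_add_sqrt hm0 hε hθ ℓ) s.cast_nonneg
    rw [← div_eq_mul_inv] at this
    linarith
  by_contra! h₂
  have h₁ := h₂.trans (Gbig.adjEig_one_le_adjEig_zero hW)
  have hθ₁ := sub_mul_treeRatio_pos hm0 hε h₁
  have hθ₂ := sub_mul_treeRatio_pos hm0 hε h₂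
  obtain ⟨f₁, f₂, hf₁, hf₂, horth, hAf₁, hAf₂⟩ := Gbig.exists_orthogonal_adjEig_eigenvectors hW
  have hg₁ := hT.comp_ne_zero hAf₁ hθ₁ hf₁
  obtain ⟨a, ha⟩ := G'.exists_eq_smul_of_adjEig_one_lt hV
    (hT.mulVec_comp_eq_smul (by omega) hAf₁ hθ₁) (hT.mulVec_comp_eq_smul (by omega) hAf₂ hθ₂)
    (hpush _ h₁) (hpush _ h₂) hg₁
  have ha0 : a ≠ 0 := by
    rintro rfl
    exact hT.comp_ne_zero hAf₂ hθ₂ hf₂ (by rw [ha, zero_smul])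
  exact hT.dotProduct_ne_zero hAf₁ hθ₁ hAf₂ hθ₂ hg₁ ha0 ha horth

/-- if `λ₂(G') < 2√(d-1+ε) - s/(√(d-1+ε)+√ε)` then the tree augmentation
`G = T_s^ℓ(d) G'` (attach `s` disjoint `(d-1)`-ary trees with `ℓ` levels to every vertex)
satisfies `λ₂(G) < 2√(d-1+ε)`. -/
theorem tree_augmentation_second_eigenvalue
    {V W : Type*} [Fintype V] [DecidableEq V] [Fintype W] [DecidableEq W]
    (d s ℓ : ℕ) (hd : 3 ≤ d) (hs : 1 ≤ s) (hℓ : 2 ≤ ℓ)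
    (hV : 1 < Fintype.card V) (hW : 1 < Fintype.card W)
    (ε : ℝ) (hε : 0 ≤ ε)
    (G' : SimpleGraph V) [DecidableRel G'.Adj]
    (Gbig : SimpleGraph W) [DecidableRel Gbig.Adj]
    (ι : V ↪ W) (X : ℕ → Finset W)
    (hX0 : ∀ w : W, w ∈ X 0 ↔ ∃ a : V, ι a = w)
    (hcover : ∀ w : W, ∃ i ≤ ℓ, w ∈ X i)
    (hdisj : ∀ i j, i ≤ ℓ → j ≤ ℓ → i ≠ j → Disjoint (X i) (X j))
    (hbase : ∀ a b : V, Gbig.Adj (ι a) (ι b) ↔ G'.Adj a b)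
    (hbase_nbrs : ∀ (a : V) (w : W), Gbig.Adj (ι a) w → (∃ b : V, ι b = w) ∨ w ∈ X 1)
    (hroots : ∀ a : V, ((X 1).filter (fun w => Gbig.Adj (ι a) w)).card = s)
    (hchild : ∀ i, 1 ≤ i → i < ℓ → ∀ u ∈ X i,
        ((X (i + 1)).filter (fun w => Gbig.Adj u w)).card = d - 1)
    (hparent : ∀ i, 1 ≤ i → i ≤ ℓ → ∀ u ∈ X i, ∃! p, p ∈ X (i - 1) ∧ Gbig.Adj u p)
    (hnbrs : ∀ i, 1 ≤ i → i ≤ ℓ → ∀ u ∈ X i, ∀ w, Gbig.Adj u w → w ∈ X (i - 1) ∪ X (i + 1))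
    (hXtop : X (ℓ + 1) = ∅)
    (hsecond : adjEig G' 1 <
      2 * Real.sqrt (d - 1 + ε) - s / (Real.sqrt (d - 1 + ε) + Real.sqrt ε)) :
    adjEig Gbig 1 < 2 * Real.sqrt (d - 1 + ε) :=
  tree_augmentation_second_eigenvalue_general d s ℓ hd hℓ hV hW ε hε G' Gbig ι X hX0 hcover hdisj
    hbase hbase_nbrs hroots hchild hparent hnbrs hXtop hsecond
end
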